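/- arXiv:1202.3013 — 8 statements merged into one kernel-verified Lean document; each statement's English description precedes it below -/
import Mathlib

section
/- Let A be a finite alphabet and let L be a language over A (a set of words, i.e., lists of letters of A). Then L is regular and prefix-closed if and only if there exists a nondeterministic finite automaton over A with finitely many states, in which every state is an accept state, whose accepted language is exactly L. -/
open Function

/-- A language is regular if it is accepted by a deterministic finite automaton
with a finite state set. -/
def RegularLang {A : Type} (L : Language A) : Prop :=
  ∃ (Q : Type) (_ : Fintype Q) (M : DFA A Q), M.accepts = L

/-- The product of a nonempty word under the letter-assignment `φ`; the empty
word is sent to `none`. This is the induced map `φ⁺` on nonempty words. -/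
def prodPlus {A S : Type} [Semigroup S] (φ : A → S) : List A → Option S
  | [] => none
  | a :: w => some (w.foldl (fun s b => s * φ b) (φ a))

/-- The induced monoid homomorphism `φ*` from the free monoid of words. -/
def monProd {A M : Type} [Monoid M] (φ : A → M) (w : List A) : M :=
  (w.map φ).prod

/-- A semigroup Markov language for `S` over `A` (with respect to `φ`): a regular,
`+`-prefix-closed language of nonempty words mapping bijectively onto `S` under `φ⁺`. -/
structure IsSgMarkovLang {A S : Type} [Semigroup S] (φ : A → S) (L : Language A) : Prop where
  regular : RegularLang L
  not_empty_mem : [] ∉ L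
  plus_prefix_closed : ∀ u v : List A, u ≠ [] → v ≠ [] → u ++ v ∈ L → u ∈ L
  unique_rep : ∀ s : S, ∃! w : List A, w ∈ L ∧ prodPlus φ w = some s

/-- A robust semigroup Markov language: additionally every word of `L` has minimal
length among (nonempty) words representing the same element. -/
structure IsRobustSgMarkovLang {A S : Type} [Semigroup S] (φ : A → S) (L : Language A)
    extends IsSgMarkovLang φ L : Prop where
  min_length : ∀ w ∈ L, ∀ v : List A, prodPlus φ v = prodPlus φ w → w.length ≤ v.length

/-- A monoid Markov language for `M` over `A` (with respect to `φ`): a regular,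
prefix-closed language mapping bijectively onto `M` under `φ*`. -/
structure IsMonMarkovLang {A M : Type} [Monoid M] (φ : A → M) (L : Language A) : Prop where
  regular : RegularLang L
  prefix_closed : ∀ u v : List A, u ++ v ∈ L → u ∈ L
  unique_rep : ∀ m : M, ∃! w : List A, w ∈ L ∧ monProd φ w = m

/-- A robust monoid Markov language: additionally every word of `L` has minimal
length among words representing the same element. -/
structure IsRobustMonMarkovLang {A M : Type} [Monoid M] (φ : A → M) (L : Language A)
    extends IsMonMarkovLang φ L : Prop where
  min_length : ∀ w ∈ L, ∀ v : List A, monProd φ v = monProd φ w → w.length ≤ v.length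

/-- `S` is Markov as a semigroup. -/
def SgMarkov (S : Type) [Semigroup S] : Prop :=
  ∃ (A : Type) (_ : Fintype A) (φ : A → S),
    (∀ s : S, ∃ w : List A, prodPlus φ w = some s) ∧
    ∃ L : Language A, IsSgMarkovLang φ L

/-- `S` is robustly Markov (as a semigroup) with respect to some alphabet. -/
def SgRobustlyMarkov (S : Type) [Semigroup S] : Prop :=
  ∃ (A : Type) (_ : Fintype A) (φ : A → S),
    (∀ s : S, ∃ w : List A, prodPlus φ w = some s) ∧
    ∃ L : Language A, IsRobustSgMarkovLang φ L

/-- `S` is strongly Markov (as a semigroup). -/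
def SgStronglyMarkov (S : Type) [Semigroup S] : Prop :=
  ∀ (A : Type) [Fintype A] (φ : A → S),
    (∀ s : S, ∃ w : List A, prodPlus φ w = some s) →
    ∃ L : Language A, IsRobustSgMarkovLang φ L

/-- `M` is Markov as a monoid. -/
def MonMarkov (M : Type) [Monoid M] : Prop :=
  ∃ (A : Type) (_ : Fintype A) (φ : A → M),
    Surjective (monProd φ) ∧ ∃ L : Language A, IsMonMarkovLang φ L

/-- `M` is robustly Markov (as a monoid) with respect to some alphabet. -/
def MonRobustlyMarkov (M : Type) [Monoid M] : Prop :=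
  ∃ (A : Type) (_ : Fintype A) (φ : A → M),
    Surjective (monProd φ) ∧ ∃ L : Language A, IsRobustMonMarkovLang φ L

/-- `M` is strongly Markov (as a monoid). -/
def MonStronglyMarkov (M : Type) [Monoid M] : Prop :=
  ∀ (A : Type) [Fintype A] (φ : A → M),
    Surjective (monProd φ) →
    ∃ L : Language A, IsRobustMonMarkovLang φ L

/-- A regular language is prefix-closed iff it is recognized by a (nondeterministic)
finite automaton in which every state is an accept state. -/
theorem stmt0 {A : Type} [Fintype A] (L : Language A) :
    (RegularLang L ∧ ∀ u v : List A, u ++ v ∈ L → u ∈ L) ↔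
      ∃ (Q : Type) (_ : Fintype Q) (N : NFA A Q),
        N.accept = Set.univ ∧ N.accepts = L := by
  constructor
  · rintro ⟨⟨Q, _, M, hM⟩, hpc⟩
    refine ⟨{q : Q // ∃ w ∈ L, M.eval w = q}, Fintype.ofFinite _,
      ⟨fun q a => {q' | q'.1 = M.step q.1 a}, {q' | q'.1 = M.start}, Set.univ⟩, rfl, ?_⟩
    set N : NFA A {q : Q // ∃ w ∈ L, M.eval w = q} :=
      ⟨fun q a => {q' | q'.1 = M.step q.1 a}, {q' | q'.1 = M.start}, Set.univ⟩ with hN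
    have key2 : ∀ w : List A, ∀ q' ∈ N.eval w, q'.1 = M.eval w := by
      intro w
      induction w using List.reverseRecOn with
      | nil => intro q' hq'; exact hq'
      | append_singleton v a ih =>
        intro q' hq'
        rw [NFA.eval_append_singleton, NFA.mem_stepSet] at hq'
        obtain ⟨p, hp, hstep⟩ := hq'
        rw [DFA.eval_append_singleton]
        rw [hstep, ih p hp]
    have key1 : ∀ w ∈ L, ∃ q' ∈ N.eval w, q'.1 = M.eval w := by
      intro w
      induction w using List.reverseRecOn with
      | nil => intro hw; exact ⟨⟨M.start, [], hw, rfl⟩, rfl, rfl⟩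
      | append_singleton v a ih =>
        intro hw
        have hv : v ∈ L := hpc v [a] hw
        obtain ⟨q', hq', hq'1⟩ := ih hv
        refine ⟨⟨M.eval (v ++ [a]), v ++ [a], hw, rfl⟩, ?_, rfl⟩
        rw [NFA.eval_append_singleton, NFA.mem_stepSet]
        refine ⟨q', hq', ?_⟩
        show M.eval (v ++ [a]) = M.step q'.1 a
        rw [DFA.eval_append_singleton, hq'1]
    ext w
    rw [NFA.mem_accepts]
    constructor
    · rintro ⟨q', -, hq'⟩
      obtain ⟨v, hv, hev⟩ := q'.2
      have hw : M.eval w = M.eval v := by rw [← key2 w q' hq', hev]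
      have : v ∈ M.accepts := hM ▸ hv
      have : w ∈ M.accepts := by
        rw [DFA.mem_accepts] at this ⊢
        rwa [hw]
      exact hM ▸ this
    · intro hw
      obtain ⟨q', hq', -⟩ := key1 w hw
      exact ⟨q', Set.mem_univ _, hq'⟩
  · rintro ⟨Q, _, N, hacc, hN⟩
    have hne : ∀ (v : List A) (S : Set Q), (N.evalFrom S v).Nonempty → S.Nonempty := by
      intro v
      induction v with
      | nil => intro S h; exact h
      | cons a v ih =>
        intro S h
        obtain ⟨q, hq⟩ := ih _ h
        rw [NFA.mem_stepSet] at hq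
        obtain ⟨p, hp, -⟩ := hq
        exact ⟨p, hp⟩
    constructor
    · exact ⟨Set Q, Fintype.ofFinite _, N.toDFA, by rw [NFA.toDFA_correct, hN]⟩
    · intro u v huv
      rw [← hN, NFA.mem_accepts] at huv ⊢
      obtain ⟨q, -, hq⟩ := huv
      have : (N.evalFrom (N.eval u) v).Nonempty := by
        refine ⟨q, ?_⟩
        have : N.eval (u ++ v) = N.evalFrom (N.eval u) v := by
          simp [NFA.eval, NFA.evalFrom, List.foldl_append]
        have h2 : q ∈ N.eval (u ++ v) := hq
        rwa [this] at h2
      obtain ⟨p, hp⟩ := hne v _ this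
      exact ⟨p, hacc ▸ Set.mem_univ p, hp⟩
end

section
/- Let A be a finite alphabet and let L be a regular language over A that does not contain the empty word. Then L is +-prefix-closed if and only if there exists a nondeterministic finite automaton over A with finitely many states, with a single initial state q₀, in which every state except q₀ is an accept state and q₀ is not an accept state, and in which no transition leads into q₀ (that is, q₀ ∉ step q a for all states q and letters a), whose accepted language is exactly L. -/
open Function

/-!
If every state but `q₀` accepts and nothing enters `q₀`, then any run on a nonempty word `u`
ends outside `q₀`; a run on `u ++ v` passes through such a state after `u`, so `u` is accepted.
Conversely, from a DFA for `L` build an NFA whose start state is a fresh copy `none` of the DFA's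
start state, keeping only the transitions into accept states. It accepts exactly the nonempty
words all of whose nonempty prefixes lie in `L`, which for a `+`-prefix-closed `L` is `L`.
-/

namespace NFA

variable {α σ : Type*} (N : NFA α σ) {q₀ : σ}

theorem ne_of_mem_eval (hq₀ : ∀ q a, q₀ ∉ N.step q a) {u : List α} (hu : u ≠ []) {s : σ}
    (hs : s ∈ N.eval u) : s ≠ q₀ := by
  obtain ⟨w, a, rfl⟩ := (List.eq_nil_or_concat u).resolve_left hu
  rw [List.concat_eq_append, eval_append_singleton, mem_stepSet] at hs
  obtain ⟨t, -, hst⟩ := hs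
  rintro rfl
  exact hq₀ t a hst

theorem mem_accepts_of_append_mem_accepts (hacc : N.accept = {q | q ≠ q₀})
    (hq₀ : ∀ q a, q₀ ∉ N.step q a) {u v : List α} (hu : u ≠ []) (huv : u ++ v ∈ N.accepts) :
    u ∈ N.accepts := by
  rw [accepts_eq_acceptsFrom_start, append_mem_acceptsFrom] at huv
  obtain ⟨_, _, hp⟩ := huv
  obtain ⟨s, hs, -⟩ := mem_evalFrom_iff_exists.mp hp
  exact ⟨s, hacc ▸ N.ne_of_mem_eval hq₀ hu hs, hs⟩

end NFA

namespace DFA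

variable {α σ : Type*} (M : DFA α σ)

def prunedNFA : NFA α (Option σ) where
  step s a := {p | p = some (M.step (s.getD M.start) a) ∧ M.step (s.getD M.start) a ∈ M.accept}
  start := {none}
  accept := {p | p ≠ none}

theorem getD_eq_eval_of_mem_prunedNFA_eval {w : List α} {p : Option σ}
    (hp : p ∈ M.prunedNFA.eval w) : p.getD M.start = M.eval w := by
  induction w using List.reverseRecOn generalizing p with
  | nil =>
    obtain rfl : p = none := hp
    rfl
  | append_singleton w a ih =>
    rw [NFA.eval_append_singleton, NFA.mem_stepSet] at hp
    obtain ⟨s, hs, rfl, -⟩ := hp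
    rw [eval_append_singleton, ← ih hs]
    rfl

theorem mem_accept_of_some_mem_prunedNFA_eval {w : List α} {q : σ}
    (hq : some q ∈ M.prunedNFA.eval w) : q ∈ M.accept := by
  rcases List.eq_nil_or_concat w with rfl | ⟨w, a, rfl⟩
  · exact absurd hq (Option.some_ne_none q)
  · rw [List.concat_eq_append, NFA.eval_append_singleton, NFA.mem_stepSet] at hq
    obtain ⟨s, -, hqs, hacc⟩ := hq
    exact Option.some_injective _ hqs ▸ hacc

theorem prunedNFA_accepts_le : M.prunedNFA.accepts ≤ M.accepts := by
  rintro w ⟨p, hp, hpw⟩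
  obtain ⟨q, rfl⟩ := Option.ne_none_iff_exists'.mp hp
  show M.eval w ∈ M.accept
  exact M.getD_eq_eval_of_mem_prunedNFA_eval hpw ▸ M.mem_accept_of_some_mem_prunedNFA_eval hpw

theorem some_eval_mem_prunedNFA_eval
    (hM : ∀ u v : List α, u ≠ [] → v ≠ [] → u ++ v ∈ M.accepts → u ∈ M.accepts)
    {w : List α} (hw : w ≠ []) (hwM : w ∈ M.accepts) : some (M.eval w) ∈ M.prunedNFA.eval w := by
  induction w using List.reverseRecOn with
  | nil => exact absurd rfl hw
  | append_singleton w a ih =>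
    have hstep : M.step (M.eval w) a ∈ M.accept := by
      rwa [mem_accepts, eval_append_singleton] at hwM
    rw [eval_append_singleton, NFA.eval_append_singleton, NFA.mem_stepSet]
    rcases eq_or_ne w [] with rfl | hw'
    · exact ⟨none, rfl, rfl, hstep⟩
    · exact ⟨some (M.eval w), ih hw' (hM w [a] hw' (List.cons_ne_nil a []) hwM), rfl, hstep⟩

theorem prunedNFA_accepts
    (hM : ∀ u v : List α, u ≠ [] → v ≠ [] → u ++ v ∈ M.accepts → u ∈ M.accepts)
    (hnil : [] ∉ M.accepts) : M.prunedNFA.accepts = M.accepts := by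
  refine M.prunedNFA_accepts_le.antisymm fun w hw => ?_
  have hw' : w ≠ [] := by rintro rfl; exact hnil hw
  exact ⟨_, Option.some_ne_none _, M.some_eval_mem_prunedNFA_eval hM hw' hw⟩

end DFA

theorem stmt1_general {A : Type} (L : Language A)
    (hreg : RegularLang L) (hne : [] ∉ L) :
    (∀ u v : List A, u ≠ [] → v ≠ [] → u ++ v ∈ L → u ∈ L) ↔
      ∃ (Q : Type) (_ : Fintype Q) (N : NFA A Q) (q₀ : Q),
        N.start = {q₀} ∧ N.accept = {q : Q | q ≠ q₀} ∧
        (∀ (q : Q) (a : A), q₀ ∉ N.step q a) ∧ N.accepts = L := by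
  constructor
  · intro hL
    obtain ⟨Q, _, M, rfl⟩ := hreg
    refine ⟨Option Q, inferInstance, M.prunedNFA, none, rfl, rfl, ?_, M.prunedNFA_accepts hL hne⟩
    exact fun q a h => Option.some_ne_none _ h.1.symm
  · rintro ⟨Q, _, N, q₀, -, hacc, hq₀, rfl⟩ u v hu - huv
    exact N.mem_accepts_of_append_mem_accepts hacc hq₀ hu huv

/-- A regular language not containing the empty word is `+`-prefix-closed iff it is
recognized by a finite automaton with a single initial state `q₀`, in which every state
except `q₀` is an accept state, and with no transitions into `q₀`. -/
theorem stmt1 {A : Type} [Fintype A] (L : Language A)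
    (hreg : RegularLang L) (hne : [] ∉ L) :
    (∀ u v : List A, u ≠ [] → v ≠ [] → u ++ v ∈ L → u ∈ L) ↔
      ∃ (Q : Type) (_ : Fintype Q) (N : NFA A Q) (q₀ : Q),
        N.start = {q₀} ∧ N.accept = {q : Q | q ≠ q₀} ∧
        (∀ (q : Q) (a : A), q₀ ∉ N.step q a) ∧ N.accepts = L :=
  stmt1_general L hreg hne
end

section
/- A monoid M is Markov as a semigroup if and only if it is Markov as a monoid. -/
open Function

/-!
Regularity is checked throughout with the Myhill–Nerode criterion (finitely many left quotients).

A monoid Markov language `L` contains `[]`, the representative of `1`. Adjoining a letter `none`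
that represents `1` and prefixing it to every word of `L` makes all words nonempty without changing
the elements they represent, which gives a semigroup Markov language. Conversely, let `w₁` represent
`1` in a semigroup Markov language `L`. Then `w₁ ++ c` and `c` represent the same element, so
stripping the prefix `w₁` from the words of `L` that have it, i.e. taking the words of `L` not
beginning with `w₁` together with the left quotient `w₁⁻¹L`, yields a monoid Markov language.
-/

namespace Language

variable {α β : Type*} {L : Language α}

theorem mem_map {f : α → β} {x : List β} : x ∈ map f L ↔ ∃ y ∈ L, y.map f = x := Iff.rfl

theorem mem_singleton_mul {p x : List α} : x ∈ ({p} * L : Language α) ↔ ∃ y ∈ L, p ++ y = x := by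
  simp only [mem_mul]
  exact ⟨fun ⟨_, rfl, h⟩ => h, fun h => ⟨p, rfl, h⟩⟩

theorem IsRegular.leftQuotient (h : L.IsRegular) (x : List α) : (L.leftQuotient x).IsRegular := by
  refine .of_finite_range_leftQuotient (h.finite_range_leftQuotient.subset ?_)
  rintro _ ⟨y, rfl⟩
  exact ⟨x ++ y, L.leftQuotient_append x y⟩

theorem IsRegular.singleton_cons_mul (h : L.IsRegular) (a : α) : ({[a]} * L).IsRegular := by
  refine .of_finite_range_leftQuotient
    (((h.finite_range_leftQuotient.insert 0).insert ({[a]} * L)).subset ?_)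
  rintro _ ⟨_ | ⟨b, x⟩, rfl⟩
  · exact Or.inl rfl
  · by_cases hb : b = a
    · subst hb
      exact Or.inr (Or.inr ⟨x, by ext y; simp [mem_singleton_mul]⟩)
    · refine Or.inr (Or.inl ?_)
      ext y
      simp [mem_singleton_mul, Ne.symm hb, notMem_zero]

theorem IsRegular.singleton_mul (h : L.IsRegular) (p : List α) : ({p} * L).IsRegular := by
  induction p with
  | nil => rwa [show ({[]} : Language α) = 1 from rfl, one_mul]
  | cons a p ih =>
    have : ({a :: p} : Language α) * L = {[a]} * ({p} * L) := by
      ext x; simp [mem_singleton_mul]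
    exact this ▸ ih.singleton_cons_mul a

theorem IsRegular.map_of_injective {f : α → β} (hf : Injective f) (h : L.IsRegular) :
    (map f L).IsRegular := by
  refine .of_finite_range_leftQuotient
    (((h.finite_range_leftQuotient.image (map f)).insert 0).subset ?_)
  rintro _ ⟨x, rfl⟩
  by_cases hx : ∃ v : List α, v.map f = x
  · obtain ⟨v, rfl⟩ := hx
    refine Or.inr ⟨_, ⟨v, rfl⟩, ?_⟩
    ext y
    simp [mem_map, List.map_eq_append_iff, (List.map_injective_iff.2 hf).eq_iff]
  · refine Or.inl ?_
    ext y
    simpa [mem_map, List.map_eq_append_iff, notMem_zero] using fun v _ _ hv _ => hx ⟨v, hv⟩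

def stripPrefix (L : Language α) (p : List α) : Language α :=
  {w | (w ∈ L ∧ ¬ p <+: w) ∨ p ++ w ∈ L}

theorem stripPrefix_eq (p : List α) :
    L.stripPrefix p = L ⊓ ({p} * L.leftQuotient p)ᶜ + L.leftQuotient p := by
  ext w
  rw [mem_add, mem_inf, mem_leftQuotient]
  change (w ∈ L ∧ ¬ p <+: w) ∨ _ ↔ (w ∈ L ∧ w ∉ {p} * L.leftQuotient p) ∨ _
  rw [mem_singleton_mul]
  refine or_congr_left (and_congr_right fun hw => not_congr ⟨fun ⟨c, hc⟩ => ?_, ?_⟩)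
  · exact ⟨c, by rwa [mem_leftQuotient, hc], hc⟩
  · exact fun ⟨c, _, hc⟩ => ⟨c, hc⟩

theorem IsRegular.stripPrefix (h : L.IsRegular) (p : List α) : (L.stripPrefix p).IsRegular :=
  stripPrefix_eq p ▸ (h.inf ((h.leftQuotient p).singleton_mul p).compl).add (h.leftQuotient p)

end Language

theorem IsSgMarkovLang.sgMarkov {A S : Type} [Fintype A] [Semigroup S] {φ : A → S}
    {L : Language A} (hL : IsSgMarkovLang φ L) : SgMarkov S :=
  ⟨A, inferInstance, φ, fun s => (hL.unique_rep s).exists.imp fun _ h => h.2, L, hL⟩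

section Monoid

variable {A M : Type} [Monoid M] {φ : A → M} {L : Language A}

theorem prodPlus_eq_some_iff {w : List A} {m : M} :
    prodPlus φ w = some m ↔ w ≠ [] ∧ monProd φ w = m := by
  cases w with
  | nil => simp [prodPlus]
  | cons a w => simp [prodPlus, monProd, List.prod_eq_foldl, List.foldl_map]

theorem monProd_append (u v : List A) : monProd φ (u ++ v) = monProd φ u * monProd φ v := by
  simp [monProd]

theorem prodPlus_none_cons_map_some (u : List A) :
    prodPlus (fun o : Option A => o.elim 1 φ) (none :: u.map some) = some (monProd φ u) :=
  prodPlus_eq_some_iff.2 ⟨List.cons_ne_nil _ _, by simp [monProd, Function.comp_def]⟩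

theorem IsMonMarkovLang.monMarkov [Fintype A] (hL : IsMonMarkovLang φ L) : MonMarkov M :=
  ⟨A, inferInstance, φ, fun m => (hL.unique_rep m).exists.imp fun _ h => h.2, L, hL⟩

open Language in
theorem IsMonMarkovLang.isSgMarkovLang_option (hL : IsMonMarkovLang φ L) :
    IsSgMarkovLang (fun o : Option A => o.elim 1 φ) ({[none]} * map some L) where
  regular := (IsRegular.map_of_injective (Option.some_injective A) hL.regular).singleton_mul _
  not_empty_mem h := by
    obtain ⟨_, -, h⟩ := mem_singleton_mul.1 h
    exact List.cons_ne_nil _ _ h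
  plus_prefix_closed u v hu _ h := by
    obtain ⟨_, ⟨t, ht, rfl⟩, h⟩ := mem_singleton_mul.1 h
    obtain ⟨a, u, rfl⟩ := List.exists_cons_of_ne_nil hu
    obtain ⟨rfl, hsplit⟩ : none = a ∧ t.map some = u ++ v := by simpa using h
    obtain ⟨t₁, t₂, rfl, rfl, -⟩ := List.map_eq_append_iff.1 hsplit
    exact mem_singleton_mul.2 ⟨_, mem_map.2 ⟨t₁, hL.prefix_closed t₁ t₂ ht, rfl⟩, rfl⟩
  unique_rep m := by
    obtain ⟨u, ⟨hu, rfl⟩, huniq⟩ := hL.unique_rep m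
    refine ⟨none :: u.map some, ⟨mem_singleton_mul.2 ⟨_, mem_map.2 ⟨u, hu, rfl⟩, rfl⟩,
      prodPlus_none_cons_map_some u⟩, ?_⟩
    rintro _ ⟨hw, hprod⟩
    obtain ⟨_, ⟨t, ht, rfl⟩, rfl⟩ := mem_singleton_mul.1 hw
    rw [List.singleton_append, prodPlus_none_cons_map_some, Option.some_inj] at hprod
    rw [List.singleton_append, huniq t ⟨ht, hprod⟩]

theorem IsSgMarkovLang.ne_nil (hL : IsSgMarkovLang φ L) {w : List A} (hw : w ∈ L) : w ≠ [] :=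
  fun h => hL.not_empty_mem (h ▸ hw)

theorem IsSgMarkovLang.eq_of_monProd_eq (hL : IsSgMarkovLang φ L) {u v : List A} (hu : u ∈ L)
    (hv : v ∈ L) (h : monProd φ u = monProd φ v) : u = v :=
  (hL.unique_rep (monProd φ v)).unique ⟨hu, prodPlus_eq_some_iff.2 ⟨hL.ne_nil hu, h⟩⟩
    ⟨hv, prodPlus_eq_some_iff.2 ⟨hL.ne_nil hv, rfl⟩⟩

theorem exists_mem_monProd_eq_of_mem_stripPrefix {w₁ y : List A} (h₁ : monProd φ w₁ = 1)
    (hy : y ∈ L.stripPrefix w₁) :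
    ∃ ly ∈ L, monProd φ ly = monProd φ y ∧ (ly = w₁ ++ y ∨ (ly = y ∧ ¬ w₁ <+: y)) := by
  rcases hy with ⟨hy, hnp⟩ | hy
  · exact ⟨y, hy, rfl, Or.inr ⟨rfl, hnp⟩⟩
  · exact ⟨w₁ ++ y, hy, by rw [monProd_append, h₁, one_mul], Or.inl rfl⟩

theorem IsSgMarkovLang.isMonMarkovLang_stripPrefix (hL : IsSgMarkovLang φ L) {w₁ : List A}
    (hw₁ : w₁ ∈ L) (h₁ : monProd φ w₁ = 1) : IsMonMarkovLang φ (L.stripPrefix w₁) where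
  regular := Language.IsRegular.stripPrefix hL.regular w₁
  prefix_closed u v h := by
    rcases eq_or_ne u [] with rfl | hu
    · exact Or.inr (by simpa using hw₁)
    rcases eq_or_ne v [] with rfl | hv
    · simpa using h
    rcases h with ⟨h, hnp⟩ | h
    · exact Or.inl
        ⟨hL.plus_prefix_closed u v hu hv h, fun hp => hnp (hp.trans (u.prefix_append v))⟩
    · exact Or.inr (hL.plus_prefix_closed (w₁ ++ u) v (by simp [hu]) hv (by simpa using h))
  unique_rep m := by
    refine existsUnique_of_exists_of_unique ?_ ?_
    · obtain ⟨w, ⟨hw, hwm⟩, -⟩ := hL.unique_rep m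
      obtain ⟨-, rfl⟩ := prodPlus_eq_some_iff.1 hwm
      by_cases hp : w₁ <+: w
      · obtain ⟨c, rfl⟩ := hp
        exact ⟨c, Or.inr hw, by rw [monProd_append, h₁, one_mul]⟩
      · exact ⟨w, Or.inl ⟨hw, hp⟩, rfl⟩
    · rintro y z ⟨hy, rfl⟩ ⟨hz, hyz⟩
      obtain ⟨ly, hly, hlyy, hy'⟩ := exists_mem_monProd_eq_of_mem_stripPrefix h₁ hy
      obtain ⟨lz, hlz, hlzz, hz'⟩ := exists_mem_monProd_eq_of_mem_stripPrefix h₁ hz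
      obtain rfl := hL.eq_of_monProd_eq hly hlz (by rw [hlyy, hlzz, hyz])
      rcases hy' with rfl | ⟨rfl, hy'⟩ <;> rcases hz' with h | ⟨rfl, hz'⟩
      · exact List.append_cancel_left h
      · exact absurd ⟨y, rfl⟩ hz'
      · exact absurd ⟨z, h.symm⟩ hy'
      · rfl

theorem IsSgMarkovLang.exists_isMonMarkovLang (hL : IsSgMarkovLang φ L) :
    ∃ L' : Language A, IsMonMarkovLang φ L' := by
  obtain ⟨w₁, ⟨hw₁, h₁⟩, -⟩ := hL.unique_rep 1
  exact ⟨_, hL.isMonMarkovLang_stripPrefix hw₁ (prodPlus_eq_some_iff.1 h₁).2⟩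

end Monoid

/-- A monoid is Markov as a semigroup iff it is Markov as a monoid. -/
theorem stmt2 {M : Type} [Monoid M] : SgMarkov M ↔ MonMarkov M := by
  constructor
  · rintro ⟨A, _, φ, -, L, hL⟩
    obtain ⟨L', hL'⟩ := hL.exists_isMonMarkovLang
    exact hL'.monMarkov
  · rintro ⟨A, _, φ, -, L, hL⟩
    exact hL.isSgMarkovLang_option.sgMarkov
end

section
/- Let S be a semigroup, A a finite alphabet, and φ : A → S a map such that the induced map φ⁺ on nonempty words (sending a₁⋯aₙ to φ(a₁)⋯φ(aₙ)) is surjective. For x ∈ S let λ_A(x) be the minimal length of a nonempty word over A representing x, and let σ_A(n) = |{s ∈ S : λ_A(s) = n}| (which is finite since A is finite). If S admits a robust semigroup Markov language over A, then the formal power series Σ_{n≥0} σ_A(n) xⁿ over ℚ is rational: there exist polynomials p, q ∈ ℚ[x] with q having nonzero constant term such that q · Σ_{n≥0} σ_A(n) xⁿ = p in ℚ⟦x⟧. -/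
/-!
Robustness makes `λ_A(s)` the length of the unique word of `L` representing `s`, so `σ_A(n)` is
the number of words of length `n` in `L`. For a DFA with transition-count matrix `T`, the vector
`c n` of numbers of accepted words of length `n` read from each state satisfies
`c (n + 1) = T c n`; hence the vector `G` of generating series satisfies `(1 - X T) G = c 0`,
and Cramer's rule gives `det (1 - X T) • G = adj (1 - X T) c 0`, whose entries are polynomials,
while `det (1 - X T)` has constant term `1`.
-/

open Function

open Matrix Finset
open scoped Polynomial PowerSeries

namespace PowerSeries

variable {R Q : Type*} [CommRing R] [Fintype Q]

theorem mk_eq_C_add_X_smul_mulVec {T : Matrix Q Q R} {g : ℕ → Q → R}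
    (hg : ∀ n, g (n + 1) = T *ᵥ g n) :
    (fun i => mk fun n => g n i) =
      (fun i => C (g 0 i)) +
        (X : R⟦X⟧) • T.map (C : R →+* R⟦X⟧) *ᵥ fun i => mk fun n => g n i := by
  funext i
  ext (_ | n)
  · simp
  · simp [hg, mulVec, dotProduct, coeff_succ_X_mul, map_sum, coeff_C_mul]

theorem exists_polynomial_mul_mk_eq_of_mulVec_recurrence [DecidableEq Q] (T : Matrix Q Q R)
    (g : ℕ → Q → R) (hg : ∀ n, g (n + 1) = T *ᵥ g n) (i : Q) :
    ∃ p q : R[X], q.coeff 0 = 1 ∧ (q : R⟦X⟧) * mk (fun n => g n i) = p := by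
  let f : R[X] →+* R⟦X⟧ := Polynomial.coeToPowerSeries.ringHom
  have hf (p : R[X]) : (p : R⟦X⟧) = f p := rfl
  let B : Matrix Q Q R[X] := 1 - (Polynomial.X : R[X]) • T.map Polynomial.C
  have hB : f.mapMatrix B = 1 - (X : R⟦X⟧) • T.map (C : R →+* R⟦X⟧) := by
    ext j k : 1
    simp only [B, RingHom.mapMatrix_apply, map_apply, Matrix.sub_apply, Matrix.smul_apply,
      one_apply, map_sub, map_one, smul_eq_mul, ← hf, Polynomial.coe_mul,
      Polynomial.coe_X, Polynomial.coe_C]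
  have hB0 : (Polynomial.evalRingHom 0).mapMatrix B = 1 := by
    ext j k
    by_cases j = k <;> simp [B, one_apply, *]
  have hBg : f.mapMatrix B *ᵥ (fun i => mk fun n => g n i) = fun j => C (g 0 j) := by
    rw [hB, sub_mulVec, one_mulVec, smul_mulVec, sub_eq_iff_eq_add]
    exact mk_eq_C_add_X_smul_mulVec hg
  refine ⟨(B.adjugate *ᵥ fun j => Polynomial.C (g 0 j)) i, B.det, ?_, ?_⟩
  · rw [Polynomial.coeff_zero_eq_eval_zero, ← Polynomial.coe_evalRingHom, RingHom.map_det, hB0,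
      det_one]
  · have := congrFun (congrArg (f.mapMatrix B).adjugate.mulVec hBg) i
    rw [mulVec_mulVec, adjugate_mul, smul_mulVec, one_mulVec] at this
    rw [hf, hf, RingHom.map_mulVec, ← RingHom.mapMatrix_apply, RingHom.map_adjugate,
      RingHom.map_det]
    simpa [Function.comp_def, ← hf] using this

end PowerSeries

theorem List.natCard_length_succ_eq_sum {A : Type*} [Fintype A] (P : List A → Prop) (n : ℕ) :
    Nat.card {w : List A // P w ∧ w.length = n + 1} =
      ∑ a, Nat.card {w : List A // P (a :: w) ∧ w.length = n} := by
  have (a : A) : Finite {w : List A // P (a :: w) ∧ w.length = n} :=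
    ((List.finite_length_eq A n).subset fun _ hw => hw.2).to_subtype
  rw [← Nat.card_sigma]
  refine Nat.card_congr
    { toFun := fun
        | ⟨a :: w, hw⟩ => ⟨a, w, hw.1, Nat.succ_injective hw.2⟩
        | ⟨[], hw⟩ => absurd hw.2 (Nat.succ_ne_zero n).symm
      invFun := fun ⟨a, w, hw⟩ => ⟨a :: w, hw.1, congrArg Nat.succ hw.2⟩
      left_inv := ?_
      right_inv := fun _ => rfl }
  rintro ⟨_ | ⟨a, w⟩, hw⟩
  · exact absurd hw.2 (Nat.succ_ne_zero n).symm
  · rfl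

namespace DFA

variable {A Q : Type*} [Fintype A] (M : DFA A Q)

noncomputable def acceptedCount (n : ℕ) (q : Q) : ℕ :=
  Nat.card {w : List A // M.evalFrom q w ∈ M.accept ∧ w.length = n}

theorem acceptedCount_succ (n : ℕ) (q : Q) :
    M.acceptedCount (n + 1) q = ∑ a, M.acceptedCount n (M.step q a) :=
  List.natCard_length_succ_eq_sum _ n

def transitionCount [DecidableEq Q] : Matrix Q Q ℕ :=
  Matrix.of fun q r => #{a | M.step q a = r}

theorem sum_step_eq_mulVec [Fintype Q] [DecidableEq Q] {R : Type*} [NonAssocSemiring R]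
    (v : Q → R) (q : Q) : ∑ a, v (M.step q a) = (M.transitionCount.map (↑) *ᵥ v) q := by
  calc ∑ a, v (M.step q a) = ∑ r, ∑ a with M.step q a = r, v (M.step q a) :=
        (Finset.sum_fiberwise _ _ _).symm
    _ = ∑ r, (#{a | M.step q a = r} : R) * v r := by
        refine Finset.sum_congr rfl fun r _ => ?_
        rw [Finset.sum_congr rfl fun a ha => by rw [(Finset.mem_filter.1 ha).2], Finset.sum_const,
          nsmul_eq_mul]
    _ = (M.transitionCount.map (↑) *ᵥ v) q := rfl

end DFA

theorem RegularLang.exists_polynomial_mul_mk_natCard_eq {A : Type} [Fintype A] {L : Language A}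
    (hL : RegularLang L) (R : Type*) [CommRing R] :
    ∃ p q : R[X], q.coeff 0 = 1 ∧
      (q : R⟦X⟧) * PowerSeries.mk (fun n => (Nat.card {w // w ∈ L ∧ w.length = n} : R)) = p := by
  classical
  obtain ⟨Q, _, M, rfl⟩ := hL
  refine PowerSeries.exists_polynomial_mul_mk_eq_of_mulVec_recurrence (M.transitionCount.map (↑))
    (fun n q => (M.acceptedCount n q : R)) (fun n => funext fun q => ?_) M.start
  rw [M.acceptedCount_succ, Nat.cast_sum]
  exact M.sum_step_eq_mulVec (fun r => (M.acceptedCount n r : R)) q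

section Markov

variable {S A : Type} [Semigroup S] {φ : A → S} {L : Language A}

/-- `λ_A(s)`, with the junk value `0` when no word represents `s`. -/
noncomputable def wordLength (φ : A → S) (s : S) : ℕ :=
  sInf {k : ℕ | ∃ w : List A, prodPlus φ w = some s ∧ w.length = k}

theorem exists_prodPlus_eq_some {w : List A} (hw : w ≠ []) : ∃ s, prodPlus φ w = some s := by
  cases w with
  | nil => exact absurd rfl hw
  | cons a w => exact ⟨_, rfl⟩

namespace IsRobustSgMarkovLang

theorem wordLength_eq (h : IsRobustSgMarkovLang φ L) {w : List A} {s : S} (hw : w ∈ L)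
    (hs : prodPlus φ w = some s) :
    wordLength φ s = w.length := by
  refine le_antisymm (Nat.sInf_le ⟨w, hs, rfl⟩) (le_csInf ⟨w.length, w, hs, rfl⟩ ?_)
  rintro k ⟨v, hv, rfl⟩
  exact h.min_length w hw v (hv.trans hs.symm)

theorem natCard_wordLength_eq (h : IsRobustSgMarkovLang φ L) (n : ℕ) :
    Nat.card {s : S // wordLength φ s = n} = Nat.card {w // w ∈ L ∧ w.length = n} := by
  choose rep hrep using fun s => (h.unique_rep s).exists
  refine Nat.card_eq_of_bijective
    (fun s => ⟨rep s, (hrep s).1, by rw [← h.wordLength_eq (hrep s).1 (hrep s).2, s.2]⟩)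
    ⟨fun s t hst => Subtype.ext (Option.some_injective S ?_), ?_⟩
  · rw [← (hrep s).2, ← (hrep t).2]
    exact congrArg (prodPlus φ ∘ Subtype.val) hst
  · rintro ⟨w, hwL, rfl⟩
    obtain ⟨s, hs⟩ := exists_prodPlus_eq_some (φ := φ) (ne_of_mem_of_not_mem hwL h.not_empty_mem)
    exact ⟨⟨s, h.wordLength_eq hwL hs⟩,
      Subtype.ext ((h.unique_rep s).unique (hrep s) ⟨hwL, hs⟩)⟩

end IsRobustSgMarkovLang

end Markov

theorem stmt6_general {S A : Type} [Semigroup S] [Fintype A] (φ : A → S)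
    (hL : ∃ L : Language A, IsRobustSgMarkovLang φ L) :
    ∃ p q : Polynomial ℚ, q.coeff 0 ≠ 0 ∧
      (q : PowerSeries ℚ) *
        PowerSeries.mk (fun n : ℕ =>
          (Nat.card {s : S //
            sInf {k : ℕ | ∃ w : List A, prodPlus φ w = some s ∧ w.length = k} = n} : ℚ)) =
      (p : PowerSeries ℚ) := by
  obtain ⟨L, hL⟩ := hL
  obtain ⟨p, q, hq, hpq⟩ := hL.regular.exists_polynomial_mul_mk_natCard_eq ℚ
  refine ⟨p, q, hq ▸ one_ne_zero, ?_⟩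
  simpa only [← hL.natCard_wordLength_eq, wordLength] using hpq

/-- If a semigroup admits a robust semigroup Markov language over `A`, then its growth
series with respect to `A` is rational. -/
theorem stmt6 {S A : Type} [Semigroup S] [Fintype A] (φ : A → S)
    (hsurj : ∀ s : S, ∃ w : List A, prodPlus φ w = some s)
    (hL : ∃ L : Language A, IsRobustSgMarkovLang φ L) :
    ∃ p q : Polynomial ℚ, q.coeff 0 ≠ 0 ∧
      (q : PowerSeries ℚ) *
        PowerSeries.mk (fun n : ℕ =>
          (Nat.card {s : S //
            sInf {k : ℕ | ∃ w : List A, prodPlus φ w = some s ∧ w.length = k} = n} : ℚ)) =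
      (p : PowerSeries ℚ) :=
  stmt6_general φ hL
end

section
/- Let S be a semigroup that admits a regular language of unique representatives over some finite alphabet representing a generating set: that is, there exist a finite alphabet B, a map ψ : B → S with induced ψ⁺ on nonempty words surjective, and a regular language K of nonempty words over B such that ψ⁺ restricted to K is a bijection onto S. Then for every finite alphabet A and every map φ : A → S with induced φ⁺ on nonempty words surjective, there exists a regular language L of nonempty words over A such that φ⁺ restricted to L is a bijection onto S. -/
open Function

namespace Stmt7Aux

/-- Substitute each letter by a word. -/
def subst {A B : Type} (c : B → List A) : List B → List A
  | [] => []
  | b :: w => c b ++ subst c w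

theorem subst_append {A B : Type} (c : B → List A) (u v : List B) :
    subst c (u ++ v) = subst c u ++ subst c v := by
  induction u with
  | nil => rfl
  | cons b u ih => simp [subst, ih]

theorem subst_eq_nil {A B : Type} {c : B → List A} (hc : ∀ b, c b ≠ []) {w : List B}
    (h : subst c w = []) : w = [] := by
  cases w with
  | nil => rfl
  | cons b w =>
    exfalso
    rw [subst, List.append_eq_nil_iff] at h
    exact hc b h.1

section Semigroup


variable {A B S : Type} [Semigroup S]

theorem foldl_mul (φ : A → S) (v : List A) (s x : S) :
    v.foldl (fun y b => y * φ b) (s * x) = s * v.foldl (fun y b => y * φ b) x := by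
  induction v generalizing x with
  | nil => rfl
  | cons b v ih => simpa [List.foldl, mul_assoc] using ih (x * φ b)

theorem prodPlus_append (φ : A → S) (a : A) (u : List A) (b : A) (v : List A) :
    prodPlus φ ((a :: u) ++ (b :: v)) =
      some ((u.foldl (fun y x => y * φ x) (φ a)) * (v.foldl (fun y x => y * φ x) (φ b))) := by
  show some (List.foldl (fun y x => y * φ x) (φ a) (u ++ b :: v)) = _
  rw [List.foldl_append]
  show some (List.foldl _ ((List.foldl _ (φ a) u) * φ b) v) = _
  rw [foldl_mul]

theorem prodPlus_subst {φ : A → S} {ψ : B → S} {c : B → List A}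
    (hc : ∀ b, prodPlus φ (c b) = some (ψ b)) :
    ∀ w : List B, prodPlus φ (subst c w) = prodPlus ψ w := by
  intro w
  induction w with
  | nil => rfl
  | cons b w ih =>
    cases w with
    | nil =>
      show prodPlus φ (c b ++ []) = _
      rw [List.append_nil, hc b]
      rfl
    | cons b' w' =>
      have hb := hc b
      rcases hl : c b with _ | ⟨a, u⟩
      · rw [hl] at hb; exact absurd hb (by simp [prodPlus])
      rw [hl] at hb
      rcases hs : subst c (b' :: w') with _ | ⟨a', v'⟩
      · rw [hs] at ih; exact absurd ih (by simp [prodPlus])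
      rw [hs] at ih
      have hgoal : subst c (b :: b' :: w') = (a :: u) ++ (a' :: v') := by
        show c b ++ subst c (b' :: w') = _
        rw [hl, hs]
      rw [hgoal, prodPlus_append]
      rw [show (b :: b' :: w' : List B) = [b] ++ (b' :: w') from rfl, prodPlus_append]
      have h1 : List.foldl (fun y x => y * φ x) (φ a) u = ψ b := Option.some.inj hb
      have h2 : List.foldl (fun y x => y * φ x) (φ a') v'
          = List.foldl (fun y x => y * ψ x) (ψ b') w' := Option.some.inj ih
      rw [h1, h2]
      rfl


end Semigroup

section NFA


variable {A B Q : Type}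

/-- The NFA over `A` recognizing the image of `M`'s language under letterwise
substitution by `c`. -/
def substNFA (M : DFA B Q) (c : B → List A) (b0 : B) :
    NFA A (Q × {u : List A // ∃ b, u <:+ c b}) where
  step p a := {p' |
    (p.2.val = [] ∧ ∃ b, c b = a :: p'.2.val ∧ p'.1 = M.step p.1 b) ∨
    (p.2.val = a :: p'.2.val ∧ p'.1 = p.1)}
  start := {(M.start, ⟨[], b0, List.nil_suffix⟩)}
  accept := {p | p.2.val = [] ∧ p.1 ∈ M.accept}

theorem substNFA_eval (M : DFA B Q) (c : B → List A) (b0 : B) (hc : ∀ b, c b ≠ [])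
    (x : List A) :
    ∀ p, p ∈ (substNFA M c b0).eval x ↔
      ((p.2.val = [] ∧ ∃ w, subst c w = x ∧ M.eval w = p.1) ∨
       (∃ w b pfx, pfx ≠ [] ∧ pfx ++ p.2.val = c b ∧ subst c w ++ pfx = x ∧
         M.eval (w ++ [b]) = p.1)) := by
  induction x using List.reverseRecOn with
  | nil =>
    intro p
    constructor
    · intro hp
      rcases Set.mem_singleton_iff.1 hp with rfl
      exact Or.inl ⟨rfl, [], rfl, rfl⟩
    · rintro (⟨hnil, w, hsw, hev⟩ | ⟨w, b, pfx, hpfx, _, hx, _⟩)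
      · rcases subst_eq_nil hc hsw with rfl
        have : p = (M.start, ⟨[], b0, List.nil_suffix⟩) := by
          rcases p with ⟨q, u⟩
          simp only [Prod.mk.injEq]
          exact ⟨hev.symm, Subtype.ext hnil⟩
        rw [this]; exact Set.mem_singleton _
      · exact absurd (List.append_eq_nil_iff.1 hx).2 hpfx
  | append_singleton x a ih =>
    intro p
    rw [NFA.eval_append_singleton, NFA.mem_stepSet]
    constructor
    · rintro ⟨t, ht, hstep⟩
      rw [ih t] at ht
      rcases hstep with ⟨htnil, b, hcb, hp1⟩ | ⟨htval, hp1⟩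
      · -- t had no pending suffix; we start a new block b
        have hw : ∃ w, subst c w = x ∧ M.eval w = t.1 := by
          rcases ht with ⟨_, hw⟩ | ⟨w, b', pfx, _, hpfx, hx, hev⟩
          · exact hw
          · rw [htnil, List.append_nil] at hpfx
            refine ⟨w ++ [b'], ?_, hev⟩
            rw [subst_append]
            show subst c w ++ (c b' ++ []) = x
            rw [List.append_nil, ← hpfx, hx]
        obtain ⟨w, hsw, hev⟩ := hw
        exact Or.inr ⟨w, b, [a], by simp,
          by rw [List.singleton_append]; exact hcb.symm, by rw [hsw],
          by rw [M.eval_append_singleton, hev, hp1]⟩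
      · -- continue reading the pending suffix
        have ht2 : ∃ w b pfx, pfx ≠ [] ∧ pfx ++ t.2.val = c b ∧ subst c w ++ pfx = x ∧
            M.eval (w ++ [b]) = t.1 := by
          rcases ht with ⟨hnil, _⟩ | h2
          · rw [htval] at hnil; exact absurd hnil (by simp)
          · exact h2
        obtain ⟨w, b, pfx, hpfx, hcat, hx, hev⟩ := ht2
        refine Or.inr ⟨w, b, pfx ++ [a], by simp, ?_, ?_, by rw [hev, hp1]⟩
        · rw [List.append_assoc, List.singleton_append, ← htval, hcat]
        · rw [← List.append_assoc, hx]
    · rintro (⟨hnil, w', hsw, hev⟩ | ⟨w, b, pfx, hpfx, hcat, hx, hev⟩)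
      · -- p completes a block exactly at x ++ [a]
        rcases List.eq_nil_or_concat w' with rfl | ⟨w, b, rfl⟩
        · exact absurd hsw (by simp [subst])
        rw [List.concat_eq_append] at hev
        rw [List.concat_eq_append, subst_append] at hsw
        have hsb : subst c [b] = c b ++ [] := rfl
        rw [hsb, List.append_nil] at hsw
        rcases List.eq_nil_or_concat (c b) with hnil' | ⟨d, alast, hd⟩
        · exact absurd hnil' (hc b)
        rw [List.concat_eq_append] at hd
        rw [hd, ← List.append_assoc] at hsw
        obtain ⟨hx', ha⟩ : subst c w ++ d = x ∧ alast = a := by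
          have := List.append_inj' hsw rfl
          exact ⟨this.1, List.singleton_injective this.2⟩
        rw [ha] at hd
        rcases eq_or_ne d [] with rfl | hdne
        · -- c b = [a] : start and finish block in one step
          refine ⟨(M.eval w, ⟨[], b0, List.nil_suffix⟩), ?_, ?_⟩
          · rw [ih]
            exact Or.inl ⟨rfl, w, by simpa using hx', rfl⟩
          · refine Or.inl ⟨rfl, b, ?_, ?_⟩
            · rw [hd, hnil]; rfl
            · rw [← hev, M.eval_append_singleton]
        · -- block b was in progress with one letter left
          refine ⟨(M.eval (w ++ [b]), ⟨[a], b, ⟨d, hd.symm⟩⟩), ?_, ?_⟩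
          · rw [ih]
            refine Or.inr ⟨w, b, d, hdne, ?_, hx', rfl⟩
            show d ++ [a] = c b
            exact hd.symm
          · refine Or.inr ⟨?_, hev.symm⟩
            show [a] = a :: p.2.val
            rw [hnil]
      · -- p is mid-block at x ++ [a]
        rcases List.eq_nil_or_concat pfx with rfl | ⟨d, alast, hd⟩
        · exact absurd rfl hpfx
        rw [List.concat_eq_append] at hd
        rw [hd, ← List.append_assoc] at hx
        obtain ⟨hx', ha⟩ : subst c w ++ d = x ∧ alast = a := by
          have := List.append_inj' hx rfl
          exact ⟨this.1, List.singleton_injective this.2⟩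
        rw [ha] at hd
        rcases eq_or_ne d [] with rfl | hdne
        · -- the block b starts with this very letter
          refine ⟨(M.eval w, ⟨[], b0, List.nil_suffix⟩), ?_, ?_⟩
          · rw [ih]
            exact Or.inl ⟨rfl, w, by simpa using hx', rfl⟩
          · refine Or.inl ⟨rfl, b, ?_, ?_⟩
            · rw [← hcat, hd]; rfl
            · rw [← hev, M.eval_append_singleton]
        · refine ⟨(M.eval (w ++ [b]), ⟨a :: p.2.val, b, d, ?_⟩), ?_, ?_⟩
          · rw [← hcat, hd]; simp
          · rw [ih]
            refine Or.inr ⟨w, b, d, hdne, ?_, hx', rfl⟩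
            show d ++ (a :: p.2.val) = c b
            rw [← hcat, hd]; simp
          · exact Or.inr ⟨rfl, hev.symm⟩

theorem substNFA_accepts (M : DFA B Q) (c : B → List A) (b0 : B) (hc : ∀ b, c b ≠ []) :
    (substNFA M c b0).accepts = {x | ∃ w ∈ M.accepts, subst c w = x} := by
  ext x
  rw [NFA.mem_accepts]
  constructor
  · rintro ⟨p, ⟨hnil, hacc⟩, hev⟩
    rw [show (substNFA M c b0).evalFrom (substNFA M c b0).start x = (substNFA M c b0).eval x
      from rfl, substNFA_eval M c b0 hc x p] at hev
    rcases hev with ⟨_, w, hsw, hevw⟩ | ⟨w, b, pfx, hpfx, hcat, hx', hevp⟩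
    · exact ⟨w, by rw [DFA.mem_accepts, hevw]; exact hacc, hsw⟩
    · rw [hnil, List.append_nil] at hcat
      refine ⟨w ++ [b], by rw [DFA.mem_accepts, hevp]; exact hacc, ?_⟩
      rw [subst_append]
      show subst c w ++ (c b ++ []) = x
      rw [List.append_nil, ← hcat, hx']
  · rintro ⟨w, hw, hsw⟩
    refine ⟨(M.eval w, ⟨[], b0, List.nil_suffix⟩), ⟨rfl, hw⟩, ?_⟩
    rw [show (substNFA M c b0).evalFrom (substNFA M c b0).start x = (substNFA M c b0).eval x
      from rfl, substNFA_eval M c b0 hc x]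
    exact Or.inl ⟨rfl, w, hsw, rfl⟩

end NFA


theorem regular_image_subst {A B : Type} [Fintype B] (c : B → List A) (b0 : B)
    (hc : ∀ b, c b ≠ []) (K : Language B) (hK : RegularLang K) :
    RegularLang {x : List A | ∃ w ∈ K, subst c w = x} := by
  classical
  obtain ⟨Q, _, M, rfl⟩ := hK
  have hfinT : Finite {u : List A // ∃ b, u <:+ c b} := by
    have hfin : {u : List A | ∃ b, u <:+ c b}.Finite := by
      have heq : {u : List A | ∃ b, u <:+ c b} = ⋃ b ∈ (Set.univ : Set B), {u | u <:+ c b} := by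
        ext u; simp
      rw [heq]
      exact Set.finite_univ.biUnion fun b _ =>
        ((c b).tails.finite_toSet).subset fun u hu => (List.mem_tails u (c b)).2 hu
    exact hfin.to_subtype
  letI : Fintype (Q × {u : List A // ∃ b, u <:+ c b}) := Fintype.ofFinite _
  refine ⟨Set (Q × {u : List A // ∃ b, u <:+ c b}), Fintype.ofFinite _,
    (substNFA M c b0).toDFA, ?_⟩
  rw [NFA.toDFA_correct, substNFA_accepts M c b0 hc]


end Stmt7Aux

/-- If a semigroup admits a regular language of unique representatives over some
finite generating alphabet, then it admits one over every finite generating alphabet. -/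
theorem stmt7 {S : Type} [Semigroup S]
    {B : Type} [Fintype B] (ψ : B → S)
    (hψ : ∀ s : S, ∃ w : List B, prodPlus ψ w = some s)
    (K : Language B) (hKreg : RegularLang K) (hKne : [] ∉ K)
    (hK : ∀ s : S, ∃! w : List B, w ∈ K ∧ prodPlus ψ w = some s)
    (A : Type) [Fintype A] (φ : A → S)
    (hφ : ∀ s : S, ∃ w : List A, prodPlus φ w = some s) :
    ∃ L : Language A, RegularLang L ∧ [] ∉ L ∧
      ∀ s : S, ∃! w : List A, w ∈ L ∧ prodPlus φ w = some s := by
  classical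
  rcases isEmpty_or_nonempty S with hS | hS
  · refine ⟨(0 : Language A), ⟨PUnit, inferInstance, ⟨fun _ _ => PUnit.unit, PUnit.unit, ∅⟩, ?_⟩, ?_, ?_⟩
    · exact Set.eq_empty_iff_forall_notMem.mpr fun x hx => hx
    · exact fun h => h
    · exact fun s => (hS.false s).elim
  · obtain ⟨s0⟩ := hS
    obtain ⟨w0, hw0⟩ := hψ s0
    have hB : Nonempty B := by
      cases w0 with
      | nil => exact absurd hw0 (by simp [prodPlus])
      | cons b _ => exact ⟨b⟩
    obtain ⟨b0⟩ := hB
    choose c hcψ using fun b => hφ (ψ b)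
    have hcne : ∀ b, c b ≠ [] := by
      intro b h
      have := hcψ b
      rw [h] at this
      exact absurd this (by simp [prodPlus])
    refine ⟨{x | ∃ w ∈ K, Stmt7Aux.subst c w = x},
      Stmt7Aux.regular_image_subst c b0 hcne K hKreg, ?_, ?_⟩
    · rintro ⟨w, hwK, hsw⟩
      rcases Stmt7Aux.subst_eq_nil hcne hsw with rfl
      exact hKne hwK
    · intro s
      obtain ⟨w, ⟨hwK, hwψ⟩, huniq⟩ := hK s
      refine ⟨Stmt7Aux.subst c w, ⟨⟨w, hwK, rfl⟩, ?_⟩, ?_⟩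
      · rw [Stmt7Aux.prodPlus_subst hcψ]; exact hwψ
      · rintro v ⟨⟨w', hw'K, rfl⟩, hv⟩
        rw [Stmt7Aux.prodPlus_subst hcψ] at hv
        rw [huniq w' ⟨hw'K, hv⟩]
end

section
/- Let A be a finite alphabet and R ⊆ List A × List A a set of rewriting rules; define u ⇒ v if there exist (ℓ, r) ∈ R and words x, y with u = x ++ ℓ ++ y and v = x ++ r ++ y, and let ⇒* be the reflexive-transitive closure of ⇒. Suppose (A, R) is noetherian (there is no infinite sequence u₁ ⇒ u₂ ⇒ ⋯), confluent (whenever u ⇒* u' and u ⇒* u'' there exists v with u' ⇒* v and u'' ⇒* v), and the set of left-hand sides {ℓ : ∃ r, (ℓ, r) ∈ R} is a regular language. Then the monoid M presented by ⟨A | R⟩ is Markov as a monoid; moreover, the language of irreducible words (words containing no left-hand side of a rule as a factor) is a monoid Markov language for M over A, where each letter a represents its image in M. Furthermore, if (A, R) is non-length-increasing (|ℓ| ≥ |r| for every rule (ℓ, r) ∈ R), then the language of irreducible words is a robust monoid Markov language for M over A. -/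
open Function

/-- Single-step rewriting relation of the rewriting system `(A, R)`. -/
def RWStep {A : Type} (R : Set (List A × List A)) (u v : List A) : Prop :=
  ∃ p ∈ R, ∃ x y : List A, u = x ++ p.1 ++ y ∧ v = x ++ p.2 ++ y

/-- The congruence on the free monoid generated by the rewriting rules `R`. -/
def presCon {A : Type} (R : Set (List A × List A)) : Con (FreeMonoid A) :=
  conGen fun u v : FreeMonoid A => (FreeMonoid.toList u, FreeMonoid.toList v) ∈ R

/-- The language of irreducible words: those containing no left-hand side of a rule
as a factor. -/
def irreducibles {A : Type} (R : Set (List A × List A)) : Language A :=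
  {w : List A | ¬ ∃ p ∈ R, ∃ x y : List A, w = x ++ p.1 ++ y}

/-!
The irreducible words are the complement of `Σ* L Σ*`, where `L` is the set of left-hand sides.
This is regular by Myhill–Nerode: the left quotient of `Σ* L Σ*` by `u` is determined by whether
`u` already has a factor in `L` and by the set of left quotients of `L` by suffixes of `u`, which
ranges over a finite set. Noetherianity gives every word an irreducible descendant, and confluence
makes the congruence generated by `R` coincide with joinability, so distinct irreducible words
represent distinct elements. Reductions never lengthen a word when the system is
non-length-increasing, and every word reduces to the irreducible word representing it.
-/

open Relation FreeMonoid

namespace Language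

variable {α : Type*} {L : Language α}

theorem mem_top_mul_mul_top {w : List α} : w ∈ ⊤ * L * ⊤ ↔ ∃ ℓ ∈ L, ℓ <:+: w := by
  simp only [mem_mul]
  constructor
  · rintro ⟨_, ⟨x, -, ℓ, hℓ, rfl⟩, y, -, rfl⟩
    exact ⟨ℓ, hℓ, x, y, rfl⟩
  · rintro ⟨ℓ, hℓ, x, y, rfl⟩
    exact ⟨x ++ ℓ, ⟨x, trivial, ℓ, hℓ, rfl⟩, y, trivial, rfl⟩

theorem leftQuotient_top_mul_mul_top (u : List α) :
    (⊤ * L * ⊤).leftQuotient u = {v | u ∈ ⊤ * L * ⊤ ∨ v ∈ ⊤ * L * ⊤ ∨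
      ∃ Q ∈ L.leftQuotient '' {s | s <:+ u}, ∃ t ∈ Q, t <+: v} := by
  ext v
  simp only [mem_leftQuotient, Set.mem_ofPred_eq, mem_top_mul_mul_top, List.infix_append_iff,
    Set.exists_mem_image]
  constructor
  · rintro ⟨ℓ, hℓ, h | h | ⟨s, t, rfl, hs, ht⟩⟩
    · exact .inl ⟨ℓ, hℓ, h⟩
    · exact .inr (.inl ⟨ℓ, hℓ, h⟩)
    · exact .inr (.inr ⟨s, hs, t, hℓ, ht⟩)
  · rintro (⟨ℓ, hℓ, h⟩ | ⟨ℓ, hℓ, h⟩ | ⟨s, hs, t, hst, ht⟩)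
    · exact ⟨ℓ, hℓ, .inl h⟩
    · exact ⟨ℓ, hℓ, .inr (.inl h)⟩
    · exact ⟨s ++ t, hst, .inr (.inr ⟨s, t, rfl, hs, ht⟩)⟩

theorem IsRegular.top_mul_mul_top (h : L.IsRegular) : (⊤ * L * ⊤).IsRegular := by
  refine .of_finite_range_leftQuotient <| Set.Finite.subset
    ((Set.finite_univ.prod h.finite_range_leftQuotient.powerset).image
      fun p : Prop × Set (Language α) => {v | p.1 ∨ v ∈ ⊤ * L * ⊤ ∨ ∃ Q ∈ p.2, ∃ t ∈ Q, t <+: v}) ?_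
  rintro _ ⟨u, rfl⟩
  exact ⟨(u ∈ ⊤ * L * ⊤, L.leftQuotient '' {s | s <:+ u}), ⟨trivial, Set.image_subset_range _ _⟩,
    (leftQuotient_top_mul_mul_top u).symm⟩

end Language

def Confluent {α : Type*} (r : α → α → Prop) : Prop :=
  ∀ a b c, ReflTransGen r a b → ReflTransGen r a c → Join (ReflTransGen r) b c

section Rewriting

variable {A : Type} {R : Set (List A × List A)}

theorem mem_irreducibles_iff_forall_not_rwStep {w : List A} :
    w ∈ irreducibles R ↔ ∀ v, ¬ RWStep R w v := by
  constructor
  · rintro h v ⟨p, hp, x, y, rfl, -⟩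
    exact h ⟨p, hp, x, y, rfl⟩
  · rintro h ⟨p, hp, x, y, rfl⟩
    exact h _ ⟨p, hp, x, y, rfl, rfl⟩

def leftSides (R : Set (List A × List A)) : Language A :=
  {ℓ | ∃ r, (ℓ, r) ∈ R}

theorem irreducibles_eq_compl : irreducibles R = (⊤ * leftSides R * ⊤)ᶜ := by
  ext w
  change (¬ _) ↔ ¬ w ∈ ⊤ * leftSides R * ⊤
  rw [Language.mem_top_mul_mul_top]
  refine not_congr ⟨?_, ?_⟩
  · rintro ⟨p, hp, x, y, rfl⟩
    exact ⟨p.1, ⟨p.2, hp⟩, x, y, rfl⟩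
  · rintro ⟨ℓ, ⟨r, hr⟩, x, y, rfl⟩
    exact ⟨(ℓ, r), hr, x, y, rfl⟩

theorem mem_irreducibles_of_append_mem {u v : List A} (h : u ++ v ∈ irreducibles R) :
    u ∈ irreducibles R := by
  rintro ⟨p, hp, x, y, rfl⟩
  exact h ⟨p, hp, x, y ++ v, by simp⟩

theorem RWStep.append_left {u v : List A} (h : RWStep R u v) (w : List A) :
    RWStep R (w ++ u) (w ++ v) := by
  obtain ⟨p, hp, x, y, rfl, rfl⟩ := h
  exact ⟨p, hp, w ++ x, y, by simp, by simp⟩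

theorem RWStep.append_right {u v : List A} (h : RWStep R u v) (w : List A) :
    RWStep R (u ++ w) (v ++ w) := by
  obtain ⟨p, hp, x, y, rfl, rfl⟩ := h
  exact ⟨p, hp, x, y ++ w, by simp, by simp⟩

theorem reflTransGen_rwStep_append {u u' v v' : List A} (hu : ReflTransGen (RWStep R) u u')
    (hv : ReflTransGen (RWStep R) v v') : ReflTransGen (RWStep R) (u ++ v) (u' ++ v') :=
  (hu.lift (· ++ v) fun _ _ h => h.append_right v).trans
    (hv.lift (u' ++ ·) fun _ _ h => h.append_left u')

theorem eq_of_reflTransGen_of_mem_irreducibles {u v : List A} (hu : u ∈ irreducibles R)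
    (h : ReflTransGen (RWStep R) u v) : v = u := by
  rcases h.cases_head with rfl | ⟨w, hw, -⟩
  · rfl
  · exact absurd hw (mem_irreducibles_iff_forall_not_rwStep.mp hu w)

theorem join_iff_reflTransGen_of_mem_irreducibles {u w : List A} (hw : w ∈ irreducibles R) :
    Join (ReflTransGen (RWStep R)) u w ↔ ReflTransGen (RWStep R) u w :=
  ⟨fun ⟨_, huz, hwz⟩ => eq_of_reflTransGen_of_mem_irreducibles hw hwz ▸ huz, fun h => ⟨w, h, .refl⟩⟩

theorem exists_reflTransGen_rwStep_mem_irreducibles (wf : WellFounded (flip (RWStep R)))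
    (u : List A) : ∃ v, ReflTransGen (RWStep R) u v ∧ v ∈ irreducibles R := by
  obtain ⟨v, huv, hmin⟩ := wf.has_min {v | ReflTransGen (RWStep R) u v} ⟨u, .refl⟩
  exact ⟨v, huv, mem_irreducibles_iff_forall_not_rwStep.mpr fun w hw => hmin w (huv.tail hw) hw⟩

theorem length_le_of_reflTransGen_rwStep (hlen : ∀ p ∈ R, p.2.length ≤ p.1.length)
    {u v : List A} (h : ReflTransGen (RWStep R) u v) : v.length ≤ u.length := by
  induction h with
  | refl => exact le_rfl
  | tail _ hstep ih =>
    obtain ⟨p, hp, x, y, rfl, rfl⟩ := hstep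
    have := hlen p hp
    simp only [List.length_append] at ih ⊢
    omega

theorem presCon_of_rwStep {u v : List A} (h : RWStep R u v) :
    presCon R (ofList u) (ofList v) := by
  obtain ⟨p, hp, x, y, rfl, rfl⟩ := h
  have hrule : presCon R (ofList p.1) (ofList p.2) := ConGen.Rel.of _ _ hp
  simpa only [ofList_append] using
    (presCon R).mul ((presCon R).mul ((presCon R).refl (ofList x)) hrule)
      ((presCon R).refl (ofList y))

theorem presCon_of_reflTransGen_rwStep {u v : List A} (h : ReflTransGen (RWStep R) u v) :
    presCon R (ofList u) (ofList v) := by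
  induction h with
  | refl => exact (presCon R).refl _
  | tail _ hstep ih => exact (presCon R).trans ih (presCon_of_rwStep hstep)

theorem monProd_mk'_of (c : Con (FreeMonoid A)) (w : List A) :
    monProd (fun a => c.mk' (of a)) w = c.mk' (ofList w) := by
  induction w with
  | nil => rfl
  | cons a w ih => rw [monProd, List.map_cons, List.prod_cons, ← monProd, ih, ofList_cons, map_mul]

theorem IsMonMarkovLang.surjective_monProd {M : Type} [Monoid M] {φ : A → M} {L : Language A}
    (h : IsMonMarkovLang φ L) : Surjective (monProd φ) :=
  fun m => (h.unique_rep m).exists.imp fun _ => And.right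

variable (hconf : Confluent (RWStep R))
include hconf

theorem presCon_iff_join {u v : FreeMonoid A} :
    presCon R u v ↔ Join (ReflTransGen (RWStep R)) (toList u) (toList v) := by
  have hequiv : Equivalence (Join (ReflTransGen (RWStep R))) := equivalence_join hconf
  constructor
  · intro h
    induction h with
    | of u v h => exact ⟨_, .single ⟨_, h, [], [], by simp, by simp⟩, .refl⟩
    | refl u => exact hequiv.refl _
    | symm _ ih => exact hequiv.symm ih
    | trans _ _ ih₁ ih₂ => exact hequiv.trans ih₁ ih₂
    | mul _ _ ih₁ ih₂ =>
      obtain ⟨c, hac, hbc⟩ := ih₁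
      obtain ⟨d, hcd, hdd⟩ := ih₂
      exact ⟨c ++ d, reflTransGen_rwStep_append hac hcd, reflTransGen_rwStep_append hbc hdd⟩
  · rintro ⟨w, huw, hvw⟩
    simpa only [ofList_toList] using
      (presCon R).trans (presCon_of_reflTransGen_rwStep huw)
        ((presCon R).symm (presCon_of_reflTransGen_rwStep hvw))

theorem monProd_eq_iff_join {u v : List A} :
    monProd (fun a => (presCon R).mk' (of a)) u = monProd (fun a => (presCon R).mk' (of a)) v ↔
      Join (ReflTransGen (RWStep R)) u v := by
  rw [monProd_mk'_of, monProd_mk'_of]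
  exact (Con.eq _).trans (presCon_iff_join hconf)

theorem irreducibles_isMonMarkovLang (wf : WellFounded (flip (RWStep R)))
    (hreg : (leftSides R).IsRegular) :
    IsMonMarkovLang (fun a => (presCon R).mk' (of a)) (irreducibles R) where
  regular := irreducibles_eq_compl (R := R) ▸ (Language.IsRegular.top_mul_mul_top hreg).compl
  prefix_closed _ _ := mem_irreducibles_of_append_mem
  unique_rep m := by
    obtain ⟨x, rfl⟩ := (presCon R).mk'_surjective m
    rw [← ofList_toList x, ← monProd_mk'_of]
    obtain ⟨w, hxw, hw⟩ := exists_reflTransGen_rwStep_mem_irreducibles wf (toList x)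
    have hwx := (monProd_eq_iff_join hconf (u := w) (v := toList x)).mpr ⟨w, .refl, hxw⟩
    refine ⟨w, ⟨hw, hwx⟩, fun w' ⟨hw', hw'x⟩ => ?_⟩
    have hw'w : ReflTransGen (RWStep R) w' w :=
      (join_iff_reflTransGen_of_mem_irreducibles hw).mp <|
        (monProd_eq_iff_join hconf).mp (hw'x.trans hwx.symm)
    exact (eq_of_reflTransGen_of_mem_irreducibles hw' hw'w).symm

theorem length_le_of_monProd_eq (hlen : ∀ p ∈ R, p.2.length ≤ p.1.length) {v w : List A}
    (hw : w ∈ irreducibles R)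
    (hvw : monProd (fun a => (presCon R).mk' (of a)) v =
      monProd (fun a => (presCon R).mk' (of a)) w) :
    w.length ≤ v.length :=
  length_le_of_reflTransGen_rwStep hlen <|
    (join_iff_reflTransGen_of_mem_irreducibles hw).mp ((monProd_eq_iff_join hconf).mp hvw)

end Rewriting

/-- If `(A, R)` is a confluent noetherian rewriting system whose set of left-hand sides
is regular, then the monoid presented by `⟨A | R⟩` is Markov as a monoid, the language
of irreducible words being a monoid Markov language; if moreover the system is
non-length-increasing, the language of irreducible words is a robust monoid Markov
language. -/
theorem stmt9 {A : Type} [Fintype A] (R : Set (List A × List A))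
    (hnoeth : ¬ ∃ f : ℕ → List A, ∀ n : ℕ, RWStep R (f n) (f (n + 1)))
    (hconf : ∀ u u' u'' : List A,
      Relation.ReflTransGen (RWStep R) u u' → Relation.ReflTransGen (RWStep R) u u'' →
      ∃ v : List A, Relation.ReflTransGen (RWStep R) u' v ∧
        Relation.ReflTransGen (RWStep R) u'' v)
    (hreg : RegularLang {ℓ : List A | ∃ r : List A, (ℓ, r) ∈ R}) :
    MonMarkov (presCon R).Quotient ∧
    IsMonMarkovLang (fun a : A => (presCon R).mk' (FreeMonoid.of a)) (irreducibles R) ∧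
    ((∀ p ∈ R, p.2.length ≤ p.1.length) →
      IsRobustMonMarkovLang (fun a : A => (presCon R).mk' (FreeMonoid.of a))
        (irreducibles R)) := by
  have wf : WellFounded (flip (RWStep R)) :=
    wellFounded_iff_isEmpty_descending_chain.mpr ⟨fun ⟨f, hf⟩ => hnoeth ⟨f, hf⟩⟩
  have hmarkov := irreducibles_isMonMarkovLang hconf wf hreg
  exact ⟨⟨A, inferInstance, _, hmarkov.surjective_monProd, _, hmarkov⟩, hmarkov,
    fun hlen => ⟨hmarkov, fun _ hw _ => length_le_of_monProd_eq hconf hlen hw⟩⟩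
end

section
/- Every finitely generated commutative semigroup is strongly Markov: for every finite alphabet A and every map φ : A → S with induced map φ⁺ on nonempty words surjective, there exists a robust semigroup Markov language for S over A. -/
open Function

/-!
In a commutative semigroup the value of a word depends only on its Parikh vector. For each `s`
take the shortlex-least Parikh vector `c_s` representing it (total length first, then
lexicographic order) and let `L` be the sorted words with these Parikh vectors; these are
geodesics by construction. Shortlex is compatible with addition, so if `c + d = c_s` and `c`
represents `t`, then `c = c_t`: otherwise `c_t + d` would beat `c_s`. This gives prefix closure,
and shows that the vectors that are neither `0` nor some `c_s` form an upper set. By Dickson's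
lemma that upper set has finitely many minimal elements, so membership in `L` only depends on
sortedness and on the Parikh vector capped at a fixed bound, both finite-state conditions.
-/

section Parikh

variable {A : Type*} [DecidableEq A]

def parikh (w : List A) : A → ℕ := fun a => w.count a

@[simp]
lemma parikh_apply (w : List A) (a : A) : parikh w a = w.count a := rfl

lemma parikh_append (u v : List A) : parikh (u ++ v) = parikh u + parikh v := by
  funext a
  simp [List.count_append]

lemma parikh_eq_zero_iff {w : List A} : parikh w = 0 ↔ w = [] := by
  simp [funext_iff, List.count_eq_zero, List.eq_nil_iff_forall_not_mem]

lemma perm_iff_parikh_eq {u v : List A} : u.Perm v ↔ parikh u = parikh v := by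
  simp [List.perm_iff_count, funext_iff]

variable [Fintype A]

lemma sum_parikh (w : List A) : ∑ a, parikh w a = w.length := by
  simpa using Multiset.sum_count_eq_card (s := Finset.univ) (m := (w : Multiset A)) (by simp)

lemma prod_map_eq_prod_pow_parikh {M : Type*} [CommMonoid M] (f : A → M) (w : List A) :
    (w.map f).prod = ∏ a, f a ^ parikh w a := by
  rw [Finset.prod_list_map_count]
  exact Finset.prod_subset (Finset.subset_univ _) fun a _ ha => by
    simp [List.count_eq_zero_of_not_mem (by simpa using ha)]

end Parikh

section OfParikh

variable {A : Type*} [LinearOrder A] [Fintype A]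

def ofParikh (c : A → ℕ) : List A := (∑ a, c a • {a} : Multiset A).sort (· ≤ ·)

lemma pairwise_ofParikh (c : A → ℕ) : (ofParikh c).Pairwise (· ≤ ·) :=
  Multiset.pairwise_sort _ _

lemma parikh_ofParikh (c : A → ℕ) : parikh (ofParikh c) = c := by
  funext a
  rw [parikh_apply, ← Multiset.coe_count, ofParikh, Multiset.sort_eq]
  simp [Multiset.count_sum', Multiset.count_singleton]

lemma ofParikh_parikh {w : List A} (hw : w.Pairwise (· ≤ ·)) : ofParikh (parikh w) = w :=
  (perm_iff_parikh_eq.2 (parikh_ofParikh _)).eq_of_pairwise' (pairwise_ofParikh _) hw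

lemma length_ofParikh (c : A → ℕ) : (ofParikh c).length = ∑ a, c a := by
  rw [← sum_parikh, parikh_ofParikh]

end OfParikh

namespace Language

variable {A : Type*}

theorem isRegular_of_mem_iff_of_append_congr {Q : Type*} {L : Language A} (f : List A → Q)
    (hf : (Set.range f).Finite) (hcongr : ∀ u u' v, f u = f u' → f (u ++ v) = f (u' ++ v))
    (P : Set Q) (hL : ∀ w, w ∈ L ↔ f w ∈ P) : L.IsRegular := by
  have hfactor : FactorsThrough L.leftQuotient f := fun u u' h => by
    ext v
    rw [mem_leftQuotient, mem_leftQuotient, hL, hL, hcongr u u' v h]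
  rw [isRegular_iff_finite_range_leftQuotient, ← hfactor.extend_comp ⊥, Set.range_comp]
  exact hf.image _

theorem isRegular_of_mem_iff_isChain_le [Preorder A] [Finite A] {L : Language A}
    (hL : ∀ w, w ∈ L ↔ w.IsChain (· ≤ ·)) : L.IsRegular := by
  classical
  let f : List A → Option (Option A) := fun w =>
    if w.IsChain (· ≤ ·) then some w.getLast? else none
  have hcongr : ∀ u u' v, f u = f u' → f (u ++ v) = f (u' ++ v) := by
    intro u u' v h
    by_cases hu : u.IsChain (· ≤ ·) <;> by_cases hu' : u'.IsChain (· ≤ ·) <;>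
      simp_all [f, List.isChain_append, List.getLast?_append]
  refine isRegular_of_mem_iff_of_append_congr f (Set.toFinite _) hcongr {none}ᶜ fun w => ?_
  simp [hL, f]

theorem isRegular_of_mem_iff_parikh_mem [DecidableEq A] [Fintype A] {L : Language A}
    {T : Set (A → ℕ)} {B : ℕ} (hT : ∀ c, (c ⊓ fun _ => B) ∈ T ↔ c ∈ T)
    (hL : ∀ w, w ∈ L ↔ parikh w ∈ T) : L.IsRegular := by
  have hf : (Set.range fun w : List A => parikh w ⊓ fun _ => B).Finite :=
    (Set.finite_Iic fun _ => B).subset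
      (Set.range_subset_iff.2 fun _ => Set.mem_Iic.2 inf_le_right)
  have hcongr : ∀ u u' v : List A, (parikh u ⊓ fun _ => B) = (parikh u' ⊓ fun _ => B) →
      (parikh (u ++ v) ⊓ fun _ => B) = (parikh (u' ++ v) ⊓ fun _ => B) := by
    intro u u' v h
    funext a
    have ha := congrFun h a
    simp only [Pi.inf_apply, parikh_append, Pi.add_apply, parikh_apply] at ha ⊢
    omega
  exact isRegular_of_mem_iff_of_append_congr _ hf hcongr T fun w => by rw [hL, hT]

end Language

theorem IsLowerSet.exists_inf_const_mem_iff {ι : Type*} [Finite ι] {N : Set (ι → ℕ)}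
    (hN : IsLowerSet N) :
    ∃ B₀, ∀ B ≥ B₀, ∀ c, (c ⊓ fun _ => B) ∈ N ↔ c ∈ N := by
  have hfin : {m | Minimal (· ∉ N) m}.Finite :=
    WellQuasiOrderedLE.finite_of_isAntichain (setOfPred_minimal_antichain _)
  obtain ⟨b, hb⟩ := hfin.bddAbove
  obtain ⟨B₀, hB₀⟩ := (Set.finite_range b).bddAbove
  refine ⟨B₀, fun B hB c => ⟨fun hcap => ?_, fun hc => hN inf_le_left hc⟩⟩
  by_contra hc
  obtain ⟨m, hmc, hm⟩ := exists_minimal_le_of_wellFoundedLT (· ∉ N) c hc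
  refine hm.prop (hN (le_inf hmc fun i => ?_) hcap)
  exact (hb hm i).trans ((hB₀ ⟨i, rfl⟩).trans hB)

section Shortlex

variable {A : Type*} [Fintype A]

def shortlex (c : A → ℕ) : ℕ ×ₗ Lex (A → ℕ) := toLex (∑ a, c a, toLex c)

lemma shortlex_add (c d : A → ℕ) : shortlex (c + d) = shortlex c + shortlex d := by
  simp only [shortlex, Pi.add_apply, Finset.sum_add_distrib, toLex_add]
  rfl

lemma shortlex_injective : Injective (shortlex : (A → ℕ) → ℕ ×ₗ Lex (A → ℕ)) :=
  fun _ _ h => toLex.injective (congrArg (·.2) (toLex.injective h))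

variable [LinearOrder A]

lemma shortlex_lt_shortlex_add {c : A → ℕ} (hc : c ≠ 0) (d : A → ℕ) :
    shortlex d < shortlex (c + d) := by
  obtain ⟨a, ha⟩ := Function.ne_iff.1 hc
  have hpos : 0 < ∑ a, c a :=
    Finset.sum_pos' (fun _ _ => Nat.zero_le _) ⟨a, Finset.mem_univ a, Nat.pos_of_ne_zero ha⟩
  refine Prod.Lex.toLex_lt_toLex.2 (Or.inl ?_)
  simp only [Pi.add_apply, Finset.sum_add_distrib]
  omega

lemma sum_le_sum_of_shortlex_le {c d : A → ℕ} (h : shortlex c ≤ shortlex d) :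
    ∑ a, c a ≤ ∑ a, d a :=
  Prod.Lex.monotone_fst _ _ h

end Shortlex

section ProdPlus

variable {S A : Type} [CommSemigroup S] (φ : A → S)

lemma coe_foldl_mul (w : List A) (x : S) :
    ((w.foldl (fun s b => s * φ b) x : S) : WithOne S) =
      x * (w.map fun a => (φ a : WithOne S)).prod := by
  induction w generalizing x with
  | nil => simp
  | cons a w ih => simp [ih, mul_assoc]

lemma prodPlus_eq_prod (w : List A) :
    prodPlus φ w = (w.map fun a => (φ a : WithOne S)).prod := by
  cases w with
  | nil => rfl
  | cons a w => exact coe_foldl_mul φ w (φ a)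

variable [Fintype A]

def vecProd (c : A → ℕ) : WithOne S := ∏ a, (φ a : WithOne S) ^ c a

lemma vecProd_add (c d : A → ℕ) : vecProd φ (c + d) = vecProd φ c * vecProd φ d := by
  simp [vecProd, pow_add, Finset.prod_mul_distrib]

lemma prodPlus_eq_vecProd_parikh [DecidableEq A] (w : List A) :
    prodPlus φ w = vecProd φ (parikh w) := by
  rw [prodPlus_eq_prod, prod_map_eq_prod_pow_parikh]
  rfl

end ProdPlus

section NormalForm

variable {S A : Type} [CommSemigroup S] [Fintype A] [LinearOrder A] (φ : A → S)
  (hs : ∀ s : S, ∃ w : List A, prodPlus φ w = some s)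

noncomputable def minRep (s : S) : A → ℕ :=
  argminOn shortlex {c | vecProd φ c = s} <| by
    obtain ⟨w, hw⟩ := hs s
    exact ⟨parikh w, by rw [Set.mem_ofPred_eq, ← prodPlus_eq_vecProd_parikh, hw]; rfl⟩

lemma vecProd_minRep (s : S) : vecProd φ (minRep φ hs s) = s :=
  argminOn_mem shortlex {c | vecProd φ c = s} _

lemma shortlex_minRep_le {s : S} {c : A → ℕ} (hc : vecProd φ c = s) :
    shortlex (minRep φ hs s) ≤ shortlex c :=
  argminOn_le shortlex {c | vecProd φ c = s} hc

lemma eq_zero_or_mem_range_minRep_of_add_eq {c d : A → ℕ} {s : S} (h : c + d = minRep φ hs s) :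
    c = 0 ∨ c ∈ Set.range (minRep φ hs) := by
  have hcd : vecProd φ c * vecProd φ d = s := by rw [← vecProd_add, h, vecProd_minRep]
  by_cases hc : c = 0
  · exact Or.inl hc
  obtain ⟨t, ht⟩ : ∃ t : S, (t : WithOne S) = vecProd φ c := by
    refine WithOne.ne_one_iff_exists.1 fun h1 => ?_
    have := shortlex_minRep_le φ hs (by simpa [h1] using hcd)
    exact (this.trans_lt (h ▸ shortlex_lt_shortlex_add hc d)).false
  refine Or.inr ⟨t, shortlex_injective (le_antisymm (shortlex_minRep_le φ hs ht.symm) ?_)⟩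
  by_contra! hlt
  have hrep : vecProd φ (minRep φ hs t + d) = s := by rw [vecProd_add, vecProd_minRep, ht, hcd]
  have := shortlex_minRep_le φ hs hrep
  rw [← h, shortlex_add, shortlex_add] at this
  exact ((add_lt_add_iff_right _).2 hlt).not_ge this

noncomputable def normalForm (s : S) : List A := ofParikh (minRep φ hs s)

def normalForms : Language A := Set.range (normalForm φ hs)

lemma prodPlus_normalForm (s : S) : prodPlus φ (normalForm φ hs s) = some s := by
  rw [prodPlus_eq_vecProd_parikh, normalForm, parikh_ofParikh, vecProd_minRep]
  rfl

lemma normalForm_ne_nil (s : S) : normalForm φ hs s ≠ [] := fun h => by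
  simpa [h, prodPlus] using prodPlus_normalForm φ hs s

lemma length_normalForm_le {s : S} {v : List A} (hv : prodPlus φ v = some s) :
    (normalForm φ hs s).length ≤ v.length := by
  rw [prodPlus_eq_vecProd_parikh] at hv
  calc (normalForm φ hs s).length = ∑ a, minRep φ hs s a := length_ofParikh _
    _ ≤ ∑ a, parikh v a := sum_le_sum_of_shortlex_le (shortlex_minRep_le φ hs hv)
    _ = v.length := sum_parikh v

lemma mem_normalForms_of_append_mem {u v : List A} (hu : u ≠ [])
    (huv : u ++ v ∈ normalForms φ hs) :
    u ∈ normalForms φ hs := by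
  obtain ⟨s, hsuv⟩ := huv
  have hsplit : parikh u + parikh v = minRep φ hs s := by
    rw [← parikh_append, ← hsuv, normalForm, parikh_ofParikh]
  have huv_sorted : (u ++ v).Pairwise (· ≤ ·) := hsuv ▸ pairwise_ofParikh _
  have hsorted : u.Pairwise (· ≤ ·) := huv_sorted.sublist (List.sublist_append_left u v)
  obtain hu0 | ⟨t, ht⟩ := eq_zero_or_mem_range_minRep_of_add_eq φ hs hsplit
  · exact absurd (parikh_eq_zero_iff.1 hu0) hu
  · exact ⟨t, by rw [normalForm, ht, ofParikh_parikh hsorted]⟩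

lemma mem_normalForms_iff {w : List A} :
    w ∈ normalForms φ hs ↔
      w.IsChain (· ≤ ·) ∧ parikh w ∈ Set.range (minRep φ hs) := by
  constructor
  · rintro ⟨s, rfl⟩
    exact ⟨List.isChain_iff_pairwise.2 (pairwise_ofParikh _), s, (parikh_ofParikh _).symm⟩
  · rintro ⟨hw, s, hs'⟩
    exact ⟨s, by rw [normalForm, hs', ofParikh_parikh (List.isChain_iff_pairwise.1 hw)]⟩

lemma isLowerSet_insert_zero_range_minRep : IsLowerSet (insert 0 (Set.range (minRep φ hs))) := by
  rintro c c' hcc' (rfl | ⟨s, rfl⟩)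
  · exact Or.inl (nonpos_iff_eq_zero.1 hcc')
  · exact eq_zero_or_mem_range_minRep_of_add_eq φ hs (add_tsub_cancel_of_le hcc')

lemma zero_notMem_range_minRep : (0 : A → ℕ) ∉ Set.range (minRep φ hs) := by
  rintro ⟨s, hs0⟩
  simpa [hs0, vecProd] using vecProd_minRep φ hs s

lemma exists_inf_const_mem_range_minRep_iff :
    ∃ B : ℕ, ∀ c,
      (c ⊓ fun _ => B) ∈ Set.range (minRep φ hs) ↔ c ∈ Set.range (minRep φ hs) := by
  obtain ⟨B₀, hB₀⟩ := (isLowerSet_insert_zero_range_minRep φ hs).exists_inf_const_mem_iff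
  refine ⟨max B₀ 1, fun c => ?_⟩
  have hcap : (c ⊓ fun _ => max B₀ 1) = 0 ↔ c = 0 := by
    simp only [funext_iff, Pi.inf_apply, Pi.zero_apply]
    exact forall_congr' fun a => by omega
  have hmem (x : A → ℕ) :
      x ∈ Set.range (minRep φ hs) ↔ x ∈ insert 0 (Set.range (minRep φ hs)) ∧ x ≠ 0 :=
    ⟨fun h => ⟨Or.inr h, fun h0 => zero_notMem_range_minRep φ hs (h0 ▸ h)⟩,
      fun ⟨h, h0⟩ => h.resolve_left h0⟩
  rw [hmem, hmem, hB₀ _ (le_max_left _ _), Ne, hcap]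

lemma isRegular_normalForms : (normalForms φ hs).IsRegular := by
  obtain ⟨B, hB⟩ := exists_inf_const_mem_range_minRep_iff φ hs
  have hchain := Language.isRegular_of_mem_iff_isChain_le
    (L := {w : List A | w.IsChain (· ≤ ·)}) fun _ => Iff.rfl
  have hparikh := Language.isRegular_of_mem_iff_parikh_mem
    (L := {w : List A | parikh w ∈ Set.range (minRep φ hs)}) hB fun _ => Iff.rfl
  convert hchain.inf hparikh using 1
  exact Set.ext fun w => mem_normalForms_iff φ hs

lemma isRobustSgMarkovLang_normalForms : IsRobustSgMarkovLang φ (normalForms φ hs) where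
  regular := isRegular_normalForms φ hs
  not_empty_mem := fun ⟨s, h⟩ => normalForm_ne_nil φ hs s h
  plus_prefix_closed _ _ hu _ := mem_normalForms_of_append_mem φ hs hu
  unique_rep s := ⟨normalForm φ hs s, ⟨⟨s, rfl⟩, prodPlus_normalForm φ hs s⟩, by
    rintro _ ⟨⟨t, rfl⟩, ht⟩
    rw [prodPlus_normalForm, Option.some_inj] at ht
    rw [ht]⟩
  min_length := by
    rintro _ ⟨s, rfl⟩ v hv
    exact length_normalForm_le φ hs (hv.trans (prodPlus_normalForm φ hs s))

end NormalForm

theorem stmt12_general {S : Type} [CommSemigroup S] :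
    SgStronglyMarkov S := by
  intro A _ φ hs
  let : LinearOrder A := LinearOrder.lift' _ (Fintype.equivFin A).injective
  exact ⟨normalForms φ hs, isRobustSgMarkovLang_normalForms φ hs⟩

/-- Every finitely generated commutative semigroup is strongly Markov. -/
theorem stmt12 {S : Type} [CommSemigroup S]
    (hfg : ∃ X : Finset S, Subsemigroup.closure (X : Set S) = ⊤) :
    SgStronglyMarkov S :=
  stmt12_general
end

section
/- Let S be a semigroup and let A be a finite alphabet consisting of ten distinct letters a, b, c, d, e, f, g, h, i, j, with a map φ : A → S whose induced map φ⁺ on nonempty words is surjective. Suppose that for all α, β ∈ ℕ ∪ {0} with α ≠ β: (1) the only nonempty word over A representing φ⁺(a b^α c d^β e) is a b^α c d^β e itself; (2) the only nonempty word over A representing φ⁺(f g^α h i^β j) is f g^α h i^β j itself; and for all α ∈ ℕ ∪ {0}: (3) φ⁺(a b^α c d^α e) = φ⁺(f g^α h i^α j), and the only nonempty words over A representing this element are a b^α c d^α e and f g^α h i^α j. Then S is not Markov as a semigroup. -/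
open Function

/-- The word `x y^α z u^β v` over the alphabet `A`. -/
def pword {A : Type} (x y z u v : A) (α β : ℕ) : List A :=
  x :: (List.replicate α y ++ z :: (List.replicate β u ++ [v]))

section AuxProd
variable {A S : Type} [Semigroup S] (φ : A → S)

lemma foldl_mul_assoc (s₀ s₁ : S) (w : List A) :
    w.foldl (fun s b => s * φ b) (s₀ * s₁) = s₀ * w.foldl (fun s b => s * φ b) s₁ := by
  induction w generalizing s₁ with
  | nil => rfl
  | cons x w ih => simp only [List.foldl_cons, mul_assoc]; exact ih (s₁ * φ x)

lemma prodPlus_ne_nil {l : List A} {s : S} (h : prodPlus φ l = some s) : l ≠ [] := by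
  rintro rfl; simp [prodPlus] at h

lemma prodPlus_isSome {l : List A} (h : l ≠ []) : ∃ s, prodPlus φ l = some s := by
  cases l with
  | nil => exact absurd rfl h
  | cons x w => exact ⟨_, rfl⟩

lemma prodPlus_append {u v : List A} {su sv : S} (hu : prodPlus φ u = some su)
    (hv : prodPlus φ v = some sv) : prodPlus φ (u ++ v) = some (su * sv) := by
  cases u with
  | nil => simp [prodPlus] at hu
  | cons x w =>
    cases v with
    | nil => simp [prodPlus] at hv
    | cons y z =>
      simp only [prodPlus, Option.some.injEq] at hu hv
      subst hu; subst hv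
      show prodPlus φ (x :: (w ++ y :: z)) = _
      simp only [prodPlus, List.foldl_append, List.foldl_cons, Option.some.injEq]
      exact foldl_mul_assoc φ _ _ _

end AuxProd

lemma pword_eq_append {A : Type} (x y z u v : A) (α β δ : ℕ) (h : δ ≤ β) :
    pword x y z u v α β =
      (x :: (List.replicate α y ++ z :: List.replicate δ u)) ++
        (List.replicate (β - δ) u ++ [v]) := by
  simp only [pword, List.cons_append, List.append_assoc, List.cons.injEq, true_and]
  congr 2
  rw [← List.append_assoc, ← List.replicate_add, Nat.add_sub_cancel' h]

lemma pword_length {A : Type} (x y z u v : A) (α β : ℕ) :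
    (pword x y z u v α β).length = α + β + 3 := by
  simp [pword]; omega

lemma split_word {A B : Type} (t : B → List A) (a b c d e : A) {K : ℕ}
    (hK : ∀ x, (t x).length ≤ K) {v : List B} {α β : ℕ} (hβ : K ≤ β)
    (hT : (v.map t).flatten = pword a b c d e α β) :
    ∃ (p q : List B) (δ : ℕ), v = p ++ q ∧ p ≠ [] ∧ δ < K ∧
      (p.map t).flatten = a :: (List.replicate α b ++ c :: List.replicate δ d) ∧
      (q.map t).flatten = List.replicate (β - δ) d ++ [e] := by
  classical
  have hex : ∃ k, α + 2 ≤ ((v.take k).map t).flatten.length :=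
    ⟨v.length, by rw [List.take_length, hT, pword_length]; omega⟩
  set k := Nat.find hex with hkdef
  have hk : α + 2 ≤ ((v.take k).map t).flatten.length := Nat.find_spec hex
  have hkn : k ≤ v.length := by
    apply Nat.find_le
    rw [List.take_length, hT, pword_length]; omega
  have hk0 : k ≠ 0 := by
    intro h; rw [h] at hk; simp at hk
  obtain ⟨m, hm⟩ := Nat.exists_eq_succ_of_ne_zero hk0
  have hmin : ¬ (α + 2 ≤ ((v.take m).map t).flatten.length) :=
    Nat.find_min hex (by omega)
  have hmlt : m < v.length := by omega
  have htake : v.take k = v.take m ++ [v[m]] := by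
    rw [hm, List.take_succ, List.getElem?_eq_getElem hmlt]; rfl
  have hstep : ((v.take k).map t).flatten.length
      ≤ ((v.take m).map t).flatten.length + K := by
    rw [htake]
    simp only [List.map_append, List.flatten_append, List.length_append,
      List.map_cons, List.map_nil, List.flatten_cons, List.flatten_nil,
      List.append_nil]
    have := hK (v[m])
    omega
  set ℓ := ((v.take k).map t).flatten.length with hℓ
  have hub : ℓ ≤ α + 1 + K := by omega
  set δ := ℓ - (α + 2) with hδ
  have hδK : δ < K := by omega
  have hδβ : δ ≤ β := by omega
  refine ⟨v.take k, v.drop k, δ, (List.take_append_drop k v).symm, ?_, hδK, ?_, ?_⟩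
  · intro hnil
    have : ℓ = 0 := by rw [hℓ, hnil]; simp
    omega
  all_goals {
    have hsplit : ((v.take k).map t).flatten ++ ((v.drop k).map t).flatten
        = pword a b c d e α β := by
      rw [← List.flatten_append, ← List.map_append, List.take_append_drop, hT]
    rw [pword_eq_append a b c d e α β δ hδβ] at hsplit
    have hlen : ((v.take k).map t).flatten.length
        = (a :: (List.replicate α b ++ c :: List.replicate δ d)).length := by
      simp only [List.length_cons, List.length_append, List.length_replicate]
      omega
    have := List.append_inj hsplit hlen
    first
      | exact this.1
      | exact this.2
  }

lemma exists_path2 {C : Type} [Finite C] (c : ℕ → ℕ → C) :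
    ∃ x y z : ℕ, x ≠ y ∧ y ≠ z ∧ c x y = c y z := by
  obtain ⟨x, y, hxy, h⟩ :=
    Finite.exists_ne_map_eq_of_infinite (fun n => (fun k => ∃ m, m ≠ n ∧ c n m = k : C → Prop))
  have hmem : ∃ m, m ≠ x ∧ c x m = c x y := ⟨y, hxy.symm, rfl⟩
  have hc := congrFun h (c x y)
  obtain ⟨z, hz, hcz⟩ : ∃ m, m ≠ y ∧ c y m = c x y := hc ▸ hmem
  exact ⟨x, y, z, hxy, hz.symm, hcz.symm⟩

/-- If, over a ten-letter generating alphabet, the elements `a b^α c d^β e` and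
`f g^α h i^β j` have unique representatives as described (coinciding exactly when
`α = β`), then the semigroup is not Markov. -/
theorem stmt13 {S : Type} [Semigroup S] {A : Type} [Fintype A]
    (a b c d e f g h i j : A)
    (hdistinct : ([a, b, c, d, e, f, g, h, i, j] : List A).Nodup)
    (hcover : ∀ x : A, x ∈ ([a, b, c, d, e, f, g, h, i, j] : List A))
    (φ : A → S)
    (hsurj : ∀ s : S, ∃ w : List A, prodPlus φ w = some s)
    (h1 : ∀ α β : ℕ, α ≠ β → ∀ w : List A,
      prodPlus φ w = prodPlus φ (pword a b c d e α β) → w = pword a b c d e α β)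
    (h2 : ∀ α β : ℕ, α ≠ β → ∀ w : List A,
      prodPlus φ w = prodPlus φ (pword f g h i j α β) → w = pword f g h i j α β)
    (h3 : ∀ α : ℕ, prodPlus φ (pword a b c d e α α) = prodPlus φ (pword f g h i j α α))
    (h4 : ∀ α : ℕ, ∀ w : List A,
      prodPlus φ w = prodPlus φ (pword a b c d e α α) →
      w = pword a b c d e α α ∨ w = pword f g h i j α α) :
    ¬ SgMarkov S := by
  
  rintro ⟨B, hBfin, ψ, hψ, L, hL⟩
  obtain ⟨Q, hQfin, M, hMacc⟩ := hL.regular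
  haveI := hBfin; haveI := hQfin
  classical
  -- translation of letters of B into words over A
  choose t ht using fun x : B => hsurj (ψ x)
  set K : ℕ := (Finset.univ.sup fun x : B => (t x).length) + 1 with hKdef
  have hKb : ∀ x : B, (t x).length ≤ K := by
    intro x
    have hsup : (t x).length ≤ Finset.univ.sup fun x : B => (t x).length :=
      Finset.le_sup (f := fun x : B => (t x).length) (Finset.mem_univ x)
    omega
  have hK1 : 1 ≤ K := by omega
  -- the translation preserves products
  have hTprod : ∀ w : List B, w ≠ [] →
      prodPlus φ ((w.map t).flatten) = prodPlus ψ w := by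
    intro w hw
    induction w with
    | nil => exact absurd rfl hw
    | cons x w ih =>
      cases w with
      | nil =>
        simp only [List.map_cons, List.map_nil, List.flatten_cons, List.flatten_nil,
          List.append_nil]
        rw [ht x]; rfl
      | cons y w' =>
        have hrest := ih (by simp)
        obtain ⟨s', hs'⟩ : ∃ s, prodPlus ψ (y :: w') = some s := ⟨_, rfl⟩
        have hTrest : prodPlus φ (((y :: w').map t).flatten) = some s' := by
          rw [hrest, hs']
        have hlhs : prodPlus φ (t x ++ ((y :: w').map t).flatten) = some (ψ x * s') :=
          prodPlus_append φ (ht x) hTrest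
        have hrhs : prodPlus ψ (x :: y :: w') = some (ψ x * s') := by
          have hxx : ([x] : List B) ++ (y :: w') = x :: y :: w' := rfl
          rw [← hxx]
          exact prodPlus_append ψ rfl hs'
        rw [hrhs]
        simpa using hlhs
  -- the special elements
  choose sA hsA using fun α β : ℕ =>
    prodPlus_isSome φ (l := pword a b c d e α β) (by simp [pword])
  choose sF hsF using fun α β : ℕ =>
    prodPlus_isSome φ (l := pword f g h i j α β) (by simp [pword])
  -- unique representatives in L
  choose rep hrep using fun s : S => hL.unique_rep s
  have hrepne : ∀ s : S, rep s ≠ [] := fun s hh => hL.not_empty_mem (hh ▸ (hrep s).1.1)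
  set vA : ℕ → ℕ → List B := fun x y => rep (sA (x + K) (y + K)) with hvA
  set vF : ℕ → ℕ → List B := fun x y => rep (sF (x + K) (y + K)) with hvF
  have hvAT : ∀ x y : ℕ, x ≠ y →
      ((vA x y).map t).flatten = pword a b c d e (x+K) (y+K) := by
    intro x y hxy
    apply h1 (x+K) (y+K) (by omega)
    rw [hTprod _ (hrepne _), (hrep _).1.2, hsA]
  have hvFT : ∀ x y : ℕ, x ≠ y →
      ((vF x y).map t).flatten = pword f g h i j (x+K) (y+K) := by
    intro x y hxy
    apply h2 (x+K) (y+K) (by omega)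
    rw [hTprod _ (hrepne _), (hrep _).1.2, hsF]
  -- splitting the representatives
  have hsplA : ∀ x y : ℕ, ∃ (p q : List B) (δ : ℕ), x ≠ y →
      (vA x y = p ++ q ∧ p ≠ [] ∧ δ < K ∧
       (p.map t).flatten = a :: (List.replicate (x+K) b ++ c :: List.replicate δ d) ∧
       (q.map t).flatten = List.replicate ((y+K) - δ) d ++ [e]) := by
    intro x y
    by_cases hxy : x = y
    · exact ⟨[], [], 0, fun hh => absurd hxy hh⟩
    · obtain ⟨p, q, δ, hh⟩ :=
        split_word t a b c d e hKb (show K ≤ y + K by omega) (hvAT x y hxy)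
      exact ⟨p, q, δ, fun _ => hh⟩
  have hsplF : ∀ x y : ℕ, ∃ (p q : List B) (δ : ℕ), x ≠ y →
      (vF x y = p ++ q ∧ p ≠ [] ∧ δ < K ∧
       (p.map t).flatten = f :: (List.replicate (x+K) g ++ h :: List.replicate δ i) ∧
       (q.map t).flatten = List.replicate ((y+K) - δ) i ++ [j]) := by
    intro x y
    by_cases hxy : x = y
    · exact ⟨[], [], 0, fun hh => absurd hxy hh⟩
    · obtain ⟨p, q, δ, hh⟩ :=
        split_word t f g h i j hKb (show K ≤ y + K by omega) (hvFT x y hxy)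
      exact ⟨p, q, δ, fun _ => hh⟩
  choose pA qA δA hPA using hsplA
  choose pF qF δF hPF using hsplF
  -- pigeonhole on the colouring
  obtain ⟨x, y, z, hxy, hyz, hc⟩ := exists_path2 (fun x y =>
    ((⟨min (δA x y) (K-1), by omega⟩ : Fin K), M.eval (pA x y),
     (⟨min (δF x y) (K-1), by omega⟩ : Fin K), M.eval (pF x y)))
  simp only [Prod.mk.injEq, Fin.mk.injEq] at hc
  obtain ⟨hc1, hc2, hc3, hc4⟩ := hc
  obtain ⟨eA1, eA2, eA3, eA4, eA5⟩ := hPA x y hxy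
  obtain ⟨fA1, fA2, fA3, fA4, fA5⟩ := hPA y z hyz
  obtain ⟨eF1, eF2, eF3, eF4, eF5⟩ := hPF x y hxy
  obtain ⟨fF1, fF2, fF3, fF4, fF5⟩ := hPF y z hyz
  have hδA : δA x y = δA y z := by
    rw [Nat.min_eq_left (by omega), Nat.min_eq_left (by omega)] at hc1; exact hc1
  have hδF : δF x y = δF y z := by
    rw [Nat.min_eq_left (by omega), Nat.min_eq_left (by omega)] at hc3; exact hc3
  set γ := y + K with hγ
  -- the two crossing words
  have hevalA : M.eval (pA y z ++ qA x y) = M.eval (vA x y) := by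
    rw [eA1]
    have h1' : M.eval (pA y z ++ qA x y) = M.evalFrom (M.eval (pA y z)) (qA x y) :=
      M.evalFrom_of_append M.start _ _
    have h2' : M.eval (pA x y ++ qA x y) = M.evalFrom (M.eval (pA x y)) (qA x y) :=
      M.evalFrom_of_append M.start _ _
    rw [h1', h2', hc2]
  have hevalF : M.eval (pF y z ++ qF x y) = M.eval (vF x y) := by
    rw [eF1]
    have h1' : M.eval (pF y z ++ qF x y) = M.evalFrom (M.eval (pF y z)) (qF x y) :=
      M.evalFrom_of_append M.start _ _
    have h2' : M.eval (pF x y ++ qF x y) = M.evalFrom (M.eval (pF x y)) (qF x y) :=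
      M.evalFrom_of_append M.start _ _
    rw [h1', h2', hc4]
  have haccA : pA y z ++ qA x y ∈ L := by
    rw [← hMacc, DFA.mem_accepts, hevalA, ← DFA.mem_accepts, hMacc]
    exact (hrep _).1.1
  have haccF : pF y z ++ qF x y ∈ L := by
    rw [← hMacc, DFA.mem_accepts, hevalF, ← DFA.mem_accepts, hMacc]
    exact (hrep _).1.1
  have hTWA : (((pA y z ++ qA x y)).map t).flatten = pword a b c d e γ γ := by
    rw [hδA] at eA5
    rw [List.map_append, List.flatten_append, fA4, eA5,
      pword_eq_append a b c d e γ γ (δA y z) (by omega)]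
  have hTWF : (((pF y z ++ qF x y)).map t).flatten = pword f g h i j γ γ := by
    rw [hδF] at eF5
    rw [List.map_append, List.flatten_append, fF4, eF5,
      pword_eq_append f g h i j γ γ (δF y z) (by omega)]
  have hWAprod : prodPlus ψ (pA y z ++ qA x y) = some (sA γ γ) := by
    have hne : pA y z ++ qA x y ≠ [] := by
      intro hh; exact fA2 (List.append_eq_nil_iff.mp hh).1
    rw [← hTprod _ hne, hTWA, hsA]
  have hWFprod : prodPlus ψ (pF y z ++ qF x y) = some (sF γ γ) := by
    have hne : pF y z ++ qF x y ≠ [] := by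
      intro hh; exact fF2 (List.append_eq_nil_iff.mp hh).1
    rw [← hTprod _ hne, hTWF, hsF]
  have hAF : sA γ γ = sF γ γ := by
    have h3' := h3 γ
    rw [hsA, hsF] at h3'
    exact Option.some.inj h3'
  have hWa_eq : pA y z ++ qA x y = rep (sA γ γ) := (hrep _).2 _ ⟨haccA, hWAprod⟩
  have hWf_eq : pF y z ++ qF x y = rep (sA γ γ) :=
    (hrep _).2 _ ⟨haccF, by rw [hWFprod, hAF]⟩
  have hWW : pword a b c d e γ γ = pword f g h i j γ γ := by
    rw [← hTWA, ← hTWF, hWa_eq.trans hWf_eq.symm]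
  have haf : a = f := by
    simp only [pword, List.cons.injEq] at hWW
    exact hWW.1
  rw [haf] at hdistinct
  simp at hdistinct
end
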